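/- arXiv:2201.10367 — 6 statements merged into one kernel-verified Lean document; each statement's English description precedes it below -/
import Mathlib

section
/- Let W ∈ ℝ^{d×2d}, written in block form W = (W₁ W₂) with W₁, W₂ ∈ ℝ^{d×d}. Let Σ := [[−P₁, P₁],[1_d, 1_d]] ∈ ℝ^{2d×2d} (which is invertible since P₁ is) and J := [[0, 1_d],[1_d, 0]]. Then the following are equivalent: (i) W has rank d and the symmetric matrix W·Σ⁻¹·J·(W·Σ⁻¹)ᵀ is positive semidefinite; (ii) there exist a matrix M ∈ ℝ^{d×d} with spectral (ℓ²-operator) norm ‖M‖ ≤ 1 and an invertible matrix K ∈ ℝ^{d×d} such that W = K·(Q₋ − MQ₊ | Q₊ − MQ₋) (a d×2d block row). Moreover, for W of the form in (ii) with K invertible and ‖M‖ ≤ 1, the matrix W·Σ⁻¹·J·(W·Σ⁻¹)ᵀ is positive definite if and only if ‖M‖ < 1. -/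
open Matrix

noncomputable section

/-- The spectral (ℓ²-operator) norm of a square real matrix. -/
def specNorm {d : ℕ} (A : Matrix (Fin d) (Fin d) ℝ) : ℝ :=
  ‖Matrix.toEuclideanCLM (𝕜 := ℝ) A‖

/-!
Since `Q₋ Q₊ = 0`, `Q₊² + Q₋² = |P₁|` and `Q₊² − Q₋² = P₁`, the block matrix
`R = [[Q₋, Q₊], [Q₊, Q₋]]` is invertible and `R Σ⁻¹ J (R Σ⁻¹)ᵀ = ½ diag(1, −1)`. Writing
`W = (X | Y) R`, the Gram matrix `W Σ⁻¹ J (W Σ⁻¹)ᵀ` becomes `½ (X Xᵀ − Y Yᵀ)`, and the lemma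
reduces to: `(X | Y)` has full rank with `X Xᵀ ≥ Y Yᵀ` iff `X` is invertible and `Y = −X M`
with `‖M‖ ≤ 1`; moreover `X Xᵀ − Y Yᵀ = X (1 − M Mᵀ) Xᵀ`, which is definite iff `‖M‖ < 1`.
-/

section PosSemidef

open scoped MatrixOrder ComplexOrder

variable {𝕜 n : Type*} [RCLike 𝕜] [Fintype n] [DecidableEq n]

theorem Matrix.PosSemidef.commute_of_commute_sq {A B : Matrix n n 𝕜} (hA : A.PosSemidef)
    (h : Commute (A ^ 2) B) : Commute A B := by
  rw [← CFC.sqrt_sq A hA.nonneg, CFC.sqrt]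
  exact h.cfcₙ_nnreal _

theorem Matrix.IsHermitian.mul_eq_zero_of_sq_mul_sq_eq_zero {A B : Matrix n n 𝕜}
    (hA : A.IsHermitian) (hB : B.IsHermitian) (h : A ^ 2 * B ^ 2 = 0) : A * B = 0 := by
  rw [← trace_conjTranspose_mul_self_eq_zero_iff, conjTranspose_mul, hA.eq, hB.eq,
    mul_assoc, ← mul_assoc A, ← sq, trace_mul_comm, mul_assoc, ← sq, h, trace_zero]

end PosSemidef

section Positivity

variable {m : Type*}

theorem Matrix.posSemidef_smul_iff {A : Matrix m m ℝ} {c : ℝ} (hc : 0 < c) :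
    (c • A).PosSemidef ↔ A.PosSemidef :=
  ⟨fun h => by simpa [smul_smul, hc.ne'] using h.smul (inv_nonneg.2 hc.le), fun h => h.smul hc.le⟩

theorem Matrix.posDef_smul_iff {A : Matrix m m ℝ} {c : ℝ} (hc : 0 < c) :
    (c • A).PosDef ↔ A.PosDef :=
  ⟨fun h => by simpa [smul_smul, hc.ne'] using h.smul (inv_pos.2 hc), fun h => h.smul hc⟩

variable [Fintype m] [DecidableEq m]

theorem Matrix.posSemidef_mul_mul_transpose_iff {U A : Matrix m m ℝ} (hU : IsUnit U.det) :
    (U * A * Uᵀ).PosSemidef ↔ A.PosSemidef := by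
  simpa [star_eq_conjTranspose] using
    ((isUnit_iff_isUnit_det U).2 hU).posSemidef_star_right_conjugate_iff (x := A)

theorem Matrix.posDef_mul_mul_transpose_iff {U A : Matrix m m ℝ} (hU : IsUnit U.det) :
    (U * A * Uᵀ).PosDef ↔ A.PosDef := by
  simpa [star_eq_conjTranspose] using
    Matrix.IsUnit.posDef_star_right_conjugate_iff ((isUnit_iff_isUnit_det U).2 hU) (x := A)

end Positivity

section OperatorNorm

theorem ContinuousLinearMap.opNorm_lt_one_iff {E F : Type*} [NormedAddCommGroup E]
    [NormedSpace ℝ E] [FiniteDimensional ℝ E] [NormedAddCommGroup F] [NormedSpace ℝ F]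
    (f : E →L[ℝ] F) : ‖f‖ < 1 ↔ ∀ x ≠ 0, ‖f x‖ < ‖x‖ := by
  refine ⟨fun h x hx => ?_, fun h => ?_⟩
  · calc ‖f x‖ ≤ ‖f‖ * ‖x‖ := f.le_opNorm x
      _ < 1 * ‖x‖ := by gcongr
      _ = ‖x‖ := one_mul _
  rcases (Metric.sphere (0 : E) 1).eq_empty_or_nonempty with hempty | hne
  · have : ‖f‖ ≤ 0 := f.opNorm_le_of_unit_norm le_rfl fun x hx =>
      absurd (mem_sphere_zero_iff_norm.2 hx) (hempty ▸ Set.notMem_empty x)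
    linarith
  obtain ⟨x₀, hx₀, hmax⟩ :=
    (isCompact_sphere (0 : E) 1).exists_isMaxOn hne f.continuous.norm.continuousOn
  have hx₀ : ‖x₀‖ = 1 := mem_sphere_zero_iff_norm.1 hx₀
  calc ‖f‖ ≤ ‖f x₀‖ :=
        f.opNorm_le_of_unit_norm (norm_nonneg _) fun x hx => hmax (mem_sphere_zero_iff_norm.2 hx)
    _ < ‖x₀‖ := h x₀ (norm_ne_zero_iff.1 (by simp [hx₀]))
    _ = 1 := hx₀

variable {n : Type*} [Fintype n] [DecidableEq n]

theorem Matrix.dotProduct_one_sub_transpose_mul_self_mulVec (A : Matrix n n ℝ)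
    (x : EuclideanSpace ℝ n) :
    x.ofLp ⬝ᵥ ((1 - Aᵀ * A) *ᵥ x.ofLp) = ‖x‖ ^ 2 - ‖toEuclideanCLM (𝕜 := ℝ) A x‖ ^ 2 := by
  rw [← real_inner_self_eq_norm_sq, ← real_inner_self_eq_norm_sq,
    EuclideanSpace.inner_eq_star_dotProduct, EuclideanSpace.inner_eq_star_dotProduct,
    ofLp_toEuclideanCLM, sub_mulVec, one_mulVec, dotProduct_sub, ← mulVec_mulVec,
    dotProduct_mulVec, vecMul_transpose]
  simp

theorem Matrix.isHermitian_one_sub_transpose_mul_self (A : Matrix n n ℝ) :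
    (1 - Aᵀ * A).IsHermitian := by
  simp [IsHermitian, conjTranspose_eq_transpose_of_trivial, transpose_sub, transpose_mul]

theorem Matrix.norm_toEuclideanCLM_le_one_iff (A : Matrix n n ℝ) :
    ‖toEuclideanCLM (𝕜 := ℝ) A‖ ≤ 1 ↔ (1 - Aᵀ * A).PosSemidef := by
  rw [ContinuousLinearMap.opNorm_le_iff zero_le_one, posSemidef_iff_dotProduct_mulVec]
  simp only [one_mul, star_trivial, isHermitian_one_sub_transpose_mul_self, true_and]
  refine ⟨fun h v => ?_, fun h x => ?_⟩
  · rw [← WithLp.ofLp_toLp 2 v, dotProduct_one_sub_transpose_mul_self_mulVec]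
    have := h (WithLp.toLp 2 v)
    nlinarith [norm_nonneg (toEuclideanCLM (𝕜 := ℝ) A (WithLp.toLp 2 v))]
  · have := h x.ofLp
    rw [dotProduct_one_sub_transpose_mul_self_mulVec] at this
    nlinarith [norm_nonneg x, norm_nonneg (toEuclideanCLM (𝕜 := ℝ) A x)]

theorem Matrix.norm_toEuclideanCLM_lt_one_iff (A : Matrix n n ℝ) :
    ‖toEuclideanCLM (𝕜 := ℝ) A‖ < 1 ↔ (1 - Aᵀ * A).PosDef := by
  rw [ContinuousLinearMap.opNorm_lt_one_iff, posDef_iff_dotProduct_mulVec]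
  simp only [star_trivial, isHermitian_one_sub_transpose_mul_self, true_and]
  refine ⟨fun h v hv => ?_, fun h x hx => ?_⟩
  · rw [← WithLp.ofLp_toLp 2 v, dotProduct_one_sub_transpose_mul_self_mulVec]
    have := h (WithLp.toLp 2 v) (by simpa using hv)
    nlinarith [norm_nonneg (toEuclideanCLM (𝕜 := ℝ) A (WithLp.toLp 2 v))]
  · have := h (x := x.ofLp) (by simpa using hx)
    rw [dotProduct_one_sub_transpose_mul_self_mulVec] at this
    nlinarith [norm_nonneg x, norm_nonneg (toEuclideanCLM (𝕜 := ℝ) A x)]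

open scoped Matrix.Norms.L2Operator in
theorem specNorm_transpose {d : ℕ} (M : Matrix (Fin d) (Fin d) ℝ) :
    specNorm Mᵀ = specNorm M := by
  rw [specNorm, specNorm, l2_opNorm_toEuclideanCLM, l2_opNorm_toEuclideanCLM,
    ← conjTranspose_eq_transpose_of_trivial, l2_opNorm_conjTranspose]

theorem specNorm_le_one_iff {d : ℕ} (M : Matrix (Fin d) (Fin d) ℝ) :
    specNorm M ≤ 1 ↔ (1 - M * Mᵀ).PosSemidef := by
  rw [← specNorm_transpose, specNorm, norm_toEuclideanCLM_le_one_iff, transpose_transpose]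

theorem specNorm_lt_one_iff {d : ℕ} (M : Matrix (Fin d) (Fin d) ℝ) :
    specNorm M < 1 ↔ (1 - M * Mᵀ).PosDef := by
  rw [← specNorm_transpose, specNorm, norm_toEuclideanCLM_lt_one_iff, transpose_transpose]

end OperatorNorm

section Rank

variable {m n K : Type*} [Fintype m] [Fintype n] [DecidableEq m] [Field K]

theorem Matrix.isUnit_of_rank_eq_card {A : Matrix m m K} (h : A.rank = Fintype.card m) :
    IsUnit A := by
  rw [← mulVec_surjective_iff_isUnit]
  exact LinearMap.range_eq_top.1
    (Submodule.eq_top_of_finrank_eq (h.trans (Module.finrank_fintype_fun_eq_card K).symm))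

theorem Matrix.rank_fromCols_of_isUnit_det {X : Matrix m m K} (Y : Matrix m n K)
    (hX : IsUnit X.det) : (fromCols X Y).rank = Fintype.card m := by
  refine le_antisymm (rank_le_card_height _) ?_
  calc Fintype.card m = X.rank := (rank_of_isUnit X ((isUnit_iff_isUnit_det X).2 hX)).symm
    _ = (fromCols X Y * (fromRows 1 0 : Matrix (m ⊕ n) m K)).rank := by
      rw [fromCols_mul_fromRows, Matrix.mul_one, Matrix.mul_zero, add_zero]
    _ ≤ (fromCols X Y).rank := rank_mul_le_left _ _

theorem Matrix.isUnit_det_of_rank_fromCols_eq {X Y : Matrix m m ℝ}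
    (hrank : (fromCols X Y).rank = Fintype.card m) (h : (X * Xᵀ - Y * Yᵀ).PosSemidef) :
    IsUnit X.det := by
  have hgram : fromCols X Y * (fromCols X Y)ᵀ = X * Xᵀ + Y * Yᵀ := by
    rw [transpose_fromCols, fromCols_mul_fromRows]
  have hsum : (X * Xᵀ + Y * Yᵀ).PosDef := by
    have := (posSemidef_self_mul_conjTranspose (fromCols X Y)).posDef_iff_isUnit.2
      (isUnit_of_rank_eq_card (by rwa [rank_self_mul_conjTranspose]))
    rwa [conjTranspose_eq_transpose_of_trivial, hgram] at this
  have hXX : (X * Xᵀ).PosDef := by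
    rw [← posDef_smul_iff two_pos, two_smul]
    simpa using hsum.add_posSemidef h
  simpa [det_mul, det_transpose] using (isUnit_iff_isUnit_det _).1 hXX.isUnit

end Rank

section Contraction

theorem Matrix.mul_transpose_sub_mul_transpose_eq {m : Type*} [Fintype m] [DecidableEq m]
    (K M : Matrix m m ℝ) : K * Kᵀ - -(K * M) * (-(K * M))ᵀ = K * (1 - M * Mᵀ) * Kᵀ := by
  simp only [transpose_neg, transpose_mul, neg_mul_neg]
  noncomm_ring

theorem rank_fromCols_eq_and_posSemidef_iff {d : ℕ} (X Y : Matrix (Fin d) (Fin d) ℝ) :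
    ((fromCols X Y).rank = d ∧ (X * Xᵀ - Y * Yᵀ).PosSemidef) ↔
      ∃ M K : Matrix (Fin d) (Fin d) ℝ, specNorm M ≤ 1 ∧ IsUnit K.det ∧
        fromCols X Y = fromCols K (-(K * M)) := by
  constructor
  · rintro ⟨hrank, hpsd⟩
    have hX := isUnit_det_of_rank_fromCols_eq (by simpa using hrank) hpsd
    have hY : Y = -(X * -(X⁻¹ * Y)) := by
      rw [mul_neg, neg_neg, mul_nonsing_inv_cancel_left _ _ hX]
    refine ⟨-(X⁻¹ * Y), X, ?_, hX, by rw [← hY]⟩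
    rwa [specNorm_le_one_iff, ← posSemidef_mul_mul_transpose_iff hX,
      ← mul_transpose_sub_mul_transpose_eq, ← hY]
  · rintro ⟨M, K, hM, hK, hXY⟩
    obtain ⟨rfl, rfl⟩ := fromCols_inj hXY
    refine ⟨by simpa using rank_fromCols_of_isUnit_det _ hK, ?_⟩
    rwa [mul_transpose_sub_mul_transpose_eq, posSemidef_mul_mul_transpose_iff hK,
      ← specNorm_le_one_iff]

end Contraction

section BlockIdentities

variable {m n : Type*} [Fintype n]

theorem Matrix.mul_fromCols_sub_mul {l : Type*} (K : Matrix l n ℝ) (M Qp Qm : Matrix n n ℝ) :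
    K * fromCols (Qm - M * Qp) (Qp - M * Qm) = fromCols K (-(K * M)) * fromBlocks Qm Qp Qp Qm := by
  rw [fromCols_mul_fromBlocks, mul_fromCols]
  congr 1 <;> simp [Matrix.mul_add, Matrix.mul_assoc, sub_eq_add_neg]

variable [DecidableEq n]

theorem Matrix.fromCols_mul_fromBlocks_one_neg_one_mul_transpose (X Y : Matrix m n ℝ) :
    fromCols X Y * (fromBlocks 1 0 0 (-1) : Matrix (n ⊕ n) (n ⊕ n) ℝ) * (fromCols X Y)ᵀ =
      X * Xᵀ - Y * Yᵀ := by
  rw [fromCols_mul_fromBlocks, transpose_fromCols, fromCols_mul_fromRows]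
  simp [sub_eq_add_neg]

theorem Matrix.fromBlocks_inv_swap_mul_swap_mul_transpose {S : Matrix n n ℝ} (hS : IsUnit S.det)
    (hSt : Sᵀ = S) :
    fromBlocks S⁻¹ S (-S⁻¹) S * fromBlocks 0 1 1 0 * (fromBlocks S⁻¹ S (-S⁻¹) S)ᵀ =
      (2 : ℝ) • fromBlocks 1 0 0 (-1) := by
  simp [fromBlocks_transpose, fromBlocks_multiply, transpose_nonsing_inv, hSt,
    mul_nonsing_inv _ hS, nonsing_inv_mul _ hS, two_smul, fromBlocks_add]

theorem Matrix.fromBlocks_sub_add_eq_mul {S D : Matrix n n ℝ} (hS : IsUnit S.det) :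
    fromBlocks (S - D) (S + D) (S + D) (S - D) =
      fromBlocks S⁻¹ S (-S⁻¹) S * fromBlocks (-(S * D)) (S * D) 1 1 := by
  simp [fromBlocks_multiply, ← mul_assoc, nonsing_inv_mul _ hS, sub_eq_add_neg, add_comm]

theorem Matrix.isUnit_det_fromBlocks_self_swap {A B : Matrix n n ℝ} (hAB : A * B = 0)
    (hBA : B * A = 0) (h : IsUnit (A * A + B * B).det) : IsUnit (fromBlocks A B B A).det := by
  have hsq : fromBlocks A B B A * fromBlocks A B B A =
      fromBlocks (A * A + B * B) 0 0 (A * A + B * B) := by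
    simp [fromBlocks_multiply, hAB, hBA, add_comm]
  rw [← isUnit_mul_self_iff, ← det_mul, hsq, det_fromBlocks_zero₂₁]
  exact h.mul h

end BlockIdentities

section SqrtParts

variable {m n : Type*} [Fintype n] [DecidableEq n]

/-- `Qp` and `Qm` are symmetric square roots of the positive and negative parts of `P`. -/
structure IsSqrtPosNegParts (P Qp Qm : Matrix n n ℝ) : Prop where
  transpose_pos : Qpᵀ = Qp
  transpose_neg : Qmᵀ = Qm
  neg_mul_pos : Qm * Qp = 0
  isUnit_det_sq_add_sq : IsUnit (Qp ^ 2 + Qm ^ 2).det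
  sq_sub_sq : Qp ^ 2 - Qm ^ 2 = P

theorem IsSqrtPosNegParts.of_sq_eq {P absP Qp Qm : Matrix n n ℝ} (habs : absP.PosDef)
    (habs2 : absP ^ 2 = P ^ 2) (hQp : Qp.PosSemidef) (hQp2 : Qp ^ 2 = (2 : ℝ)⁻¹ • (absP + P))
    (hQm : Qm.PosSemidef) (hQm2 : Qm ^ 2 = (2 : ℝ)⁻¹ • (absP - P)) :
    IsSqrtPosNegParts P Qp Qm where
  transpose_pos := (conjTranspose_eq_transpose_of_trivial Qp).symm.trans hQp.isHermitian.eq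
  transpose_neg := (conjTranspose_eq_transpose_of_trivial Qm).symm.trans hQm.isHermitian.eq
  neg_mul_pos := by
    have hcomm : Commute absP P :=
      habs.posSemidef.commute_of_commute_sq (habs2 ▸ (Commute.refl P).pow_left 2)
    refine hQm.isHermitian.mul_eq_zero_of_sq_mul_sq_eq_zero hQp.isHermitian ?_
    rw [hQm2, hQp2, smul_mul_smul_comm, sub_mul, mul_add, mul_add, ← sq, ← sq, habs2, hcomm.eq]
    simp [sq, add_comm]
  isUnit_det_sq_add_sq := by
    rw [hQp2, hQm2, show (2 : ℝ)⁻¹ • (absP + P) + (2 : ℝ)⁻¹ • (absP - P) = absP by module]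
    exact (isUnit_iff_isUnit_det _).1 habs.isUnit
  sq_sub_sq := by rw [hQp2, hQm2]; module

namespace IsSqrtPosNegParts

variable {P Qp Qm : Matrix n n ℝ}

theorem pos_mul_neg (h : IsSqrtPosNegParts P Qp Qm) : Qp * Qm = 0 := by
  simpa [transpose_mul, h.transpose_pos, h.transpose_neg] using congrArg transpose h.neg_mul_pos

theorem isUnit_det_add (h : IsSqrtPosNegParts P Qp Qm) : IsUnit (Qp + Qm).det := by
  have hsq : (Qp + Qm) * (Qp + Qm) = Qp ^ 2 + Qm ^ 2 := by
    simp [add_mul, mul_add, sq, h.neg_mul_pos, h.pos_mul_neg]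
  rw [← isUnit_mul_self_iff, ← det_mul, hsq]
  exact h.isUnit_det_sq_add_sq

theorem add_mul_sub (h : IsSqrtPosNegParts P Qp Qm) : (Qp + Qm) * (Qp - Qm) = P := by
  rw [← h.sq_sub_sq]
  simp [add_mul, mul_sub, sq, h.neg_mul_pos, h.pos_mul_neg]

theorem isUnit_det_fromBlocks (h : IsSqrtPosNegParts P Qp Qm) :
    IsUnit (fromBlocks Qm Qp Qp Qm).det :=
  isUnit_det_fromBlocks_self_swap h.neg_mul_pos h.pos_mul_neg
    (by simpa [sq, add_comm] using h.isUnit_det_sq_add_sq)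

theorem gram_eq (h : IsSqrtPosNegParts P Qp Qm) {Sig J : Matrix (n ⊕ n) (n ⊕ n) ℝ}
    (hSig : Sig = fromBlocks (-P) P 1 1) (hJ : J = fromBlocks 0 1 1 0)
    {W : Matrix m (n ⊕ n) ℝ} {X Y : Matrix m n ℝ}
    (hW : W = fromCols X Y * fromBlocks Qm Qp Qp Qm) :
    W * Sig⁻¹ * J * (W * Sig⁻¹)ᵀ = (2 : ℝ)⁻¹ • (X * Xᵀ - Y * Yᵀ) := by
  set Z := fromBlocks (Qp + Qm)⁻¹ (Qp + Qm) (-(Qp + Qm)⁻¹) (Qp + Qm)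
  have hR : fromBlocks Qm Qp Qp Qm = (2 : ℝ)⁻¹ • Z * Sig := by
    rw [hSig, ← h.add_mul_sub, Matrix.smul_mul, ← fromBlocks_sub_add_eq_mul h.isUnit_det_add,
      fromBlocks_smul]
    congr 1 <;> module
  have hSigU : IsUnit Sig.det :=
    isUnit_of_mul_isUnit_right (by rw [← det_mul, ← hR]; exact h.isUnit_det_fromBlocks)
  have hWSig : W * Sig⁻¹ = (2 : ℝ)⁻¹ • (fromCols X Y * Z) := by
    rw [hW, hR, ← Matrix.mul_assoc, mul_nonsing_inv_cancel_right _ _ hSigU, Matrix.mul_smul]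
  calc W * Sig⁻¹ * J * (W * Sig⁻¹)ᵀ
      = ((2 : ℝ)⁻¹ * (2 : ℝ)⁻¹) • (fromCols X Y * (Z * J * Zᵀ) * (fromCols X Y)ᵀ) := by
        rw [hWSig, transpose_smul, transpose_mul, Matrix.smul_mul, Matrix.smul_mul,
          Matrix.mul_smul, smul_smul]
        simp only [Matrix.mul_assoc]
    _ = (2 : ℝ)⁻¹ • (X * Xᵀ - Y * Yᵀ) := by
        rw [hJ, fromBlocks_inv_swap_mul_swap_mul_transpose h.isUnit_det_add
            (by rw [transpose_add, h.transpose_pos, h.transpose_neg]),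
          Matrix.mul_smul, Matrix.smul_mul, fromCols_mul_fromBlocks_one_neg_one_mul_transpose,
          smul_smul]
        norm_num

end IsSqrtPosNegParts

end SqrtParts

theorem stmt_1_general {d : ℕ} (P1 absP1 Qp Qm : Matrix (Fin d) (Fin d) ℝ)
    -- `absP1` is the unique symmetric positive definite square root of `P1 ^ 2`
    (habs : absP1.PosDef) (habs2 : absP1 ^ 2 = P1 ^ 2)
    -- `Qp` is the unique symmetric positive semidefinite square root of `(|P₁| + P₁)/2`
    (hQp : Qp.PosSemidef) (hQp2 : Qp ^ 2 = (2 : ℝ)⁻¹ • (absP1 + P1))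
    -- `Qm` is the unique symmetric positive semidefinite square root of `(|P₁| − P₁)/2`
    (hQm : Qm.PosSemidef) (hQm2 : Qm ^ 2 = (2 : ℝ)⁻¹ • (absP1 - P1))
    (W : Matrix (Fin d) (Fin d ⊕ Fin d) ℝ)
    (Sig J : Matrix (Fin d ⊕ Fin d) (Fin d ⊕ Fin d) ℝ)
    (hSig : Sig = Matrix.fromBlocks (-P1) P1 1 1)
    (hJ : J = Matrix.fromBlocks 0 1 1 0) :
    ((W.rank = d ∧ (W * Sig⁻¹ * J * (W * Sig⁻¹)ᵀ).PosSemidef) ↔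
      (∃ M K : Matrix (Fin d) (Fin d) ℝ, specNorm M ≤ 1 ∧ IsUnit K.det ∧
        W = K * Matrix.fromCols (Qm - M * Qp) (Qp - M * Qm))) ∧
    (∀ M K : Matrix (Fin d) (Fin d) ℝ, specNorm M ≤ 1 → IsUnit K.det →
      W = K * Matrix.fromCols (Qm - M * Qp) (Qp - M * Qm) →
      ((W * Sig⁻¹ * J * (W * Sig⁻¹)ᵀ).PosDef ↔ specNorm M < 1)) := by
  have h := IsSqrtPosNegParts.of_sq_eq habs habs2 hQp hQp2 hQm hQm2
  have hR := h.isUnit_det_fromBlocks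
  refine ⟨?_, fun M K _ hK hW => ?_⟩
  · obtain ⟨X, Y, hW⟩ :
        ∃ X Y : Matrix (Fin d) (Fin d) ℝ, W = fromCols X Y * fromBlocks Qm Qp Qp Qm :=
      ⟨_, _, by rw [fromCols_toCols, nonsing_inv_mul_cancel_right _ _ hR]⟩
    rw [h.gram_eq hSig hJ hW, posSemidef_smul_iff (by norm_num), hW,
      rank_mul_eq_left_of_isUnit_det _ _ hR, rank_fromCols_eq_and_posSemidef_iff]
    refine exists₂_congr fun M K => and_congr_right' (and_congr_right' ?_)
    rw [mul_fromCols_sub_mul]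
    have := invertibleOfIsUnitDet _ hR
    exact (Matrix.mul_left_inj_of_invertible _).symm
  · rw [h.gram_eq hSig hJ (hW.trans (mul_fromCols_sub_mul K M Qp Qm)),
      posDef_smul_iff (by norm_num), mul_transpose_sub_mul_transpose_eq,
      posDef_mul_mul_transpose_iff hK, specNorm_lt_one_iff]

/-- **Lemma 2.3.** Characterisation of the boundary matrices `W` for which the
port-Hamiltonian operator is m-accretive, via `W = K (Q₋ − MQ₊ | Q₊ − MQ₋)`
with `K` invertible and `‖M‖ ≤ 1`; moreover strict positive definiteness
corresponds to `‖M‖ < 1`. -/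
theorem stmt_1 {d : ℕ} (P1 absP1 Qp Qm : Matrix (Fin d) (Fin d) ℝ)
    (hP1symm : P1.IsSymm) (hP1inv : IsUnit P1.det)
    -- `absP1` is the unique symmetric positive definite square root of `P1 ^ 2`
    (habs : absP1.PosDef) (habs2 : absP1 ^ 2 = P1 ^ 2)
    -- `Qp` is the unique symmetric positive semidefinite square root of `(|P₁| + P₁)/2`
    (hQp : Qp.PosSemidef) (hQp2 : Qp ^ 2 = (2 : ℝ)⁻¹ • (absP1 + P1))
    -- `Qm` is the unique symmetric positive semidefinite square root of `(|P₁| − P₁)/2`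
    (hQm : Qm.PosSemidef) (hQm2 : Qm ^ 2 = (2 : ℝ)⁻¹ • (absP1 - P1))
    (W : Matrix (Fin d) (Fin d ⊕ Fin d) ℝ)
    (Sig J : Matrix (Fin d ⊕ Fin d) (Fin d ⊕ Fin d) ℝ)
    (hSig : Sig = Matrix.fromBlocks (-P1) P1 1 1)
    (hJ : J = Matrix.fromBlocks 0 1 1 0) :
    ((W.rank = d ∧ (W * Sig⁻¹ * J * (W * Sig⁻¹)ᵀ).PosSemidef) ↔
      (∃ M K : Matrix (Fin d) (Fin d) ℝ, specNorm M ≤ 1 ∧ IsUnit K.det ∧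
        W = K * Matrix.fromCols (Qm - M * Qp) (Qp - M * Qm))) ∧
    (∀ M K : Matrix (Fin d) (Fin d) ℝ, specNorm M ≤ 1 → IsUnit K.det →
      W = K * Matrix.fromCols (Qm - M * Qp) (Qp - M * Qm) →
      ((W * Sig⁻¹ * J * (W * Sig⁻¹)ᵀ).PosDef ↔ specNorm M < 1)) :=
  stmt_1_general P1 absP1 Qp Qm habs habs2 hQp hQp2 hQm hQm2 W Sig J hSig hJ

end
end

section
/- Let a < b be reals and let v : [a,b] → ℝ^d belong to H¹ with derivative v' = g. Then 2·∫_a^b ⟨P₁·g(x), v(x)⟩ dx = ‖Q₊v(b) + Q₋v(a)‖² − ‖Q₊v(a) + Q₋v(b)‖², where ‖·‖ is the Euclidean norm on ℝ^d. -/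
/-!
Each coordinate of `v = v a + ∫ g` is absolutely continuous with derivative `g` a.e., so
integration by parts for absolutely continuous functions gives
`∫ (⟪P₁ g, v⟫ + ⟪P₁ v, g⟫) = ⟪P₁ v(b), v(b)⟫ - ⟪P₁ v(a), v(a)⟫`, and for symmetric `P₁` the
integrand is `2 ⟪P₁ g, v⟫`.

On the other side `Q₊ Q₋ = 0`: the trace of `(Q₊Q₋)(Q₊Q₋)ᵀ` is
`tr (Q₊² Q₋²) = tr ((|P₁| + P₁)(|P₁| - P₁)) / 4`, which vanishes because `|P₁|² = P₁²` and
`tr (|P₁| P₁) = tr (P₁ |P₁|)`. Hence the cross terms of the two squared norms cancel and their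
difference is `⟪(Q₊² - Q₋²) v(b), v(b)⟫ - ⟪(Q₊² - Q₋²) v(a), v(a)⟫` with `Q₊² - Q₋² = P₁`.
-/

open Matrix MeasureTheory

noncomputable section

def euclNorm {d : ℕ} (x : Fin d → ℝ) : ℝ :=
  ‖(WithLp.equiv 2 (Fin d → ℝ)).symm x‖

open Set

section Primitive

variable {a b : ℝ} {u w p q : ℝ → ℝ}

theorem IntervalIntegrable.absolutelyContinuousOnInterval_const_add_integral
    (hp : IntervalIntegrable p volume a b) (c : ℝ) :
    AbsolutelyContinuousOnInterval (fun x ↦ c + ∫ t in a..x, p t) a b := by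
  simpa only [AbsolutelyContinuousOnInterval, dist_add_left] using
    hp.absolutelyContinuousOnInterval_intervalIntegral left_mem_uIcc

theorem IntervalIntegrable.ae_deriv_const_add_integral (hp : IntervalIntegrable p volume a b)
    (c : ℝ) : ∀ᵐ x, x ∈ uIcc a b → deriv (fun x ↦ c + ∫ t in a..x, p t) x = p x := by
  filter_upwards [hp.ae_hasDerivAt_integral] with x hx hxab
  exact ((hx hxab a left_mem_uIcc).const_add c).deriv

theorem integral_mul_add_mul_eq_sub_of_eq_primitive (hp : IntervalIntegrable p volume a b)
    (hq : IntervalIntegrable q volume a b)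
    (hu : ∀ x ∈ uIcc a b, u x = u a + ∫ t in a..x, p t)
    (hw : ∀ x ∈ uIcc a b, w x = w a + ∫ t in a..x, q t) :
    ∫ x in a..b, (p x * w x + u x * q x) = u b * w b - u a * w a := by
  set U := fun x ↦ u a + ∫ t in a..x, p t
  set W := fun x ↦ w a + ∫ t in a..x, q t
  calc ∫ x in a..b, (p x * w x + u x * q x)
      = ∫ x in a..b, (deriv U x * W x + U x * deriv W x) := by
        refine intervalIntegral.integral_congr_ae ?_
        filter_upwards [hp.ae_deriv_const_add_integral (u a),
          hq.ae_deriv_const_add_integral (w a)] with x hU hW hx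
        have hx' := uIoc_subset_uIcc hx
        rw [hU hx', hW hx', hu x hx', hw x hx']
    _ = U b * W b - U a * W a :=
        (hp.absolutelyContinuousOnInterval_const_add_integral _).integral_deriv_mul_eq_sub
          (hq.absolutelyContinuousOnInterval_const_add_integral _)
    _ = u b * w b - u a * w a := by
        simp only [U, W, ← hu b right_mem_uIcc, ← hw b right_mem_uIcc,
          intervalIntegral.integral_same, add_zero]

theorem continuousOn_of_eq_primitive (hp : IntervalIntegrable p volume a b)
    (hu : ∀ x ∈ uIcc a b, u x = u a + ∫ t in a..x, p t) : ContinuousOn u (uIcc a b) :=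
  (hp.absolutelyContinuousOnInterval_const_add_integral (u a)).continuousOn.congr hu

end Primitive

section MatrixAlgebra

variable {n : Type*} [Fintype n]

theorem Matrix.mulVec_dotProduct_eq_sum {R : Type*} [NonUnitalSemiring R] (P : Matrix n n R)
    (u w : n → R) : P *ᵥ u ⬝ᵥ w = ∑ i, ∑ j, P i j * (u j * w i) := by
  simp only [dotProduct, mulVec, Finset.sum_mul, mul_assoc]

theorem Matrix.IsSymm.mulVec_dotProduct_comm {R : Type*} [CommSemiring R] {P : Matrix n n R}
    (hP : P.IsSymm) (u w : n → R) : P *ᵥ u ⬝ᵥ w = P *ᵥ w ⬝ᵥ u := by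
  rw [dotProduct_comm, ← dotProduct_transpose_mulVec, hP.eq, dotProduct_comm]

theorem Matrix.IsSymm.mulVec_dotProduct_mulVec {R : Type*} [CommSemiring R] {A : Matrix n n R}
    (hA : A.IsSymm) (B : Matrix n n R) (u w : n → R) :
    A *ᵥ u ⬝ᵥ B *ᵥ w = (A * B) *ᵥ w ⬝ᵥ u := by
  rw [← mulVec_mulVec, hA.mulVec_dotProduct_comm]

theorem Matrix.trace_add_mul_sub_eq_zero [DecidableEq n] {R : Type*} [CommRing R]
    {S P : Matrix n n R} (h : S ^ 2 = P ^ 2) : trace ((S + P) * (S - P)) = 0 := by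
  rw [add_mul, mul_sub, mul_sub, trace_add, trace_sub, trace_sub, trace_mul_comm P S,
    ← sq, ← sq, h]
  ring

theorem Matrix.IsSymm.mul_eq_zero_of_trace_sq_mul_sq [DecidableEq n] {A B : Matrix n n ℝ}
    (hA : A.IsSymm) (hB : B.IsSymm) (h : trace (A ^ 2 * B ^ 2) = 0) : A * B = 0 := by
  rw [← trace_mul_conjTranspose_self_eq_zero_iff, conjTranspose_eq_transpose_of_trivial,
    transpose_mul, hA.eq, hB.eq, ← h, sq, sq]
  simp only [← Matrix.mul_assoc]
  rw [trace_mul_comm _ A]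
  simp only [Matrix.mul_assoc]

theorem dotProduct_self_sub_dotProduct_self_of_mul_eq_zero [DecidableEq n]
    {A B : Matrix n n ℝ} (hA : A.IsSymm) (hB : B.IsSymm) (hAB : A * B = 0) (x y : n → ℝ) :
    (A *ᵥ x + B *ᵥ y) ⬝ᵥ (A *ᵥ x + B *ᵥ y) - (A *ᵥ y + B *ᵥ x) ⬝ᵥ (A *ᵥ y + B *ᵥ x) =
      (A ^ 2 - B ^ 2) *ᵥ x ⬝ᵥ x - (A ^ 2 - B ^ 2) *ᵥ y ⬝ᵥ y := by
  have hBA : B * A = 0 := by rw [← hA.eq, ← hB.eq, ← transpose_mul, hAB, transpose_zero]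
  simp only [add_dotProduct, dotProduct_add, hA.mulVec_dotProduct_mulVec,
    hB.mulVec_dotProduct_mulVec, hAB, hBA, zero_mulVec, zero_dotProduct, sub_mulVec,
    sub_dotProduct, sq]
  ring

end MatrixAlgebra

section Vector

variable {n : Type*} [Fintype n] {a b : ℝ} {v g : ℝ → n → ℝ}

theorem IntervalIntegrable.eval (hg : IntervalIntegrable g volume a b) (i : n) :
    IntervalIntegrable (fun x ↦ g x i) volume a b :=
  ⟨hg.1.eval i, hg.2.eval i⟩

theorem eval_eq_primitive (hg : IntervalIntegrable g volume a b)
    (hv : ∀ x ∈ uIcc a b, v x = v a + ∫ t in a..x, g t) (i : n) :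
    ∀ x ∈ uIcc a b, v x i = v a i + ∫ t in a..x, g t i := by
  intro x hx
  have hgx : IntervalIntegrable g volume a x := hg.mono_set (uIcc_subset_uIcc_left hx)
  rw [hv x hx, Pi.add_apply]
  exact congrArg _
    ((ContinuousLinearMap.proj (R := ℝ) (φ := fun _ : n ↦ ℝ) i).intervalIntegral_comp_comm hgx).symm

theorem integral_mulVec_dotProduct_add_eq_sub (P : Matrix n n ℝ)
    (hg : IntervalIntegrable g volume a b)
    (hv : ∀ x ∈ uIcc a b, v x = v a + ∫ t in a..x, g t) :
    ∫ x in a..b, (P *ᵥ g x ⬝ᵥ v x + P *ᵥ v x ⬝ᵥ g x) = P *ᵥ v b ⬝ᵥ v b - P *ᵥ v a ⬝ᵥ v a := by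
  have hvi := eval_eq_primitive hg hv
  have hcont i := continuousOn_of_eq_primitive (hg.eval i) (hvi i)
  have hint i j : IntervalIntegrable (fun x ↦ g x j * v x i + v x j * g x i) volume a b :=
    ((hg.eval j).mul_continuousOn (hcont i)).add ((hg.eval i).continuousOn_mul (hcont j))
  calc ∫ x in a..b, (P *ᵥ g x ⬝ᵥ v x + P *ᵥ v x ⬝ᵥ g x)
      = ∫ x in a..b, ∑ i, ∑ j, P i j * (g x j * v x i + v x j * g x i) := by
        simp only [mulVec_dotProduct_eq_sum, mul_add, Finset.sum_add_distrib]
    _ = ∑ i, ∑ j, P i j * (v b j * v b i - v a j * v a i) := by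
        have hrow i : IntervalIntegrable
            (fun x ↦ ∑ j, P i j * (g x j * v x i + v x j * g x i)) volume a b := by
          simpa only [Finset.sum_fn] using
            IntervalIntegrable.sum Finset.univ fun j _ ↦ (hint i j).const_mul (P i j)
        rw [intervalIntegral.integral_finsetSum fun i _ ↦ hrow i]
        refine Finset.sum_congr rfl fun i _ ↦ ?_
        rw [intervalIntegral.integral_finsetSum fun j _ ↦ (hint i j).const_mul _]
        refine Finset.sum_congr rfl fun j _ ↦ ?_
        rw [intervalIntegral.integral_const_mul, integral_mul_add_mul_eq_sub_of_eq_primitive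
          (hg.eval j) (hg.eval i) (hvi j) (hvi i)]
    _ = P *ᵥ v b ⬝ᵥ v b - P *ᵥ v a ⬝ᵥ v a := by
        simp only [mulVec_dotProduct_eq_sum, mul_sub, Finset.sum_sub_distrib]

end Vector

theorem euclNorm_sq {d : ℕ} (x : Fin d → ℝ) : euclNorm x ^ 2 = x ⬝ᵥ x := by
  rw [euclNorm, EuclideanSpace.norm_sq_eq]
  simp [dotProduct, sq]

theorem stmt_2_general {d : ℕ} (P1 absP1 Qp Qm : Matrix (Fin d) (Fin d) ℝ)
    (hP1symm : P1.IsSymm)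
    (habs2 : absP1 ^ 2 = P1 ^ 2)
    (hQp : Qp.PosSemidef) (hQp2 : Qp ^ 2 = (2 : ℝ)⁻¹ • (absP1 + P1))
    (hQm : Qm.PosSemidef) (hQm2 : Qm ^ 2 = (2 : ℝ)⁻¹ • (absP1 - P1))
    (a b : ℝ) (hab : a < b)
    (v g : ℝ → Fin d → ℝ)
    (hg : MemLp g 2 (volume.restrict (Set.Ioc a b)))
    (hvg : ∀ x ∈ Set.Icc a b, v x = v a + ∫ s in a..x, g s) :
    2 * ∫ x in a..b, (P1.mulVec (g x)) ⬝ᵥ (v x) =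
      euclNorm (Qp.mulVec (v b) + Qm.mulVec (v a)) ^ 2 -
        euclNorm (Qp.mulVec (v a) + Qm.mulVec (v b)) ^ 2 := by
  have hQpsymm : Qp.IsSymm := isHermitian_iff_isSymm.mp hQp.isHermitian
  have hQmsymm : Qm.IsSymm := isHermitian_iff_isSymm.mp hQm.isHermitian
  have hQpQm : Qp * Qm = 0 := by
    refine hQpsymm.mul_eq_zero_of_trace_sq_mul_sq hQmsymm ?_
    rw [hQp2, hQm2, smul_mul_smul, trace_smul, trace_add_mul_sub_eq_zero habs2, smul_zero]
  have hdiff : Qp ^ 2 - Qm ^ 2 = P1 := by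
    rw [hQp2, hQm2]
    module
  have hgi : IntervalIntegrable g volume a b :=
    (intervalIntegrable_iff_integrableOn_Ioc_of_le hab.le).2 (hg.integrable one_le_two)
  have hvi : ∀ x ∈ uIcc a b, v x = v a + ∫ t in a..x, g t := by rwa [uIcc_of_le hab.le]
  have hibp := integral_mulVec_dotProduct_add_eq_sub P1 hgi hvi
  simp only [hP1symm.mulVec_dotProduct_comm (v _), ← two_mul,
    intervalIntegral.integral_const_mul] at hibp
  rw [hibp, euclNorm_sq, euclNorm_sq,
    dotProduct_self_sub_dotProduct_self_of_mul_eq_zero hQpsymm hQmsymm hQpQm, hdiff]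

/-- **Boundary-energy identity (Theorem 2.4, "moreover" part).**
For `v ∈ H¹([a,b]; ℝ^d)` with derivative `g`,
`2 ∫_a^b ⟨P₁ g(x), v(x)⟩ dx = ‖Q₊v(b) + Q₋v(a)‖² − ‖Q₊v(a) + Q₋v(b)‖²`. -/
theorem stmt_2 {d : ℕ} (P1 absP1 Qp Qm : Matrix (Fin d) (Fin d) ℝ)
    (hP1symm : P1.IsSymm) (hP1inv : IsUnit P1.det)
    (habs : absP1.PosDef) (habs2 : absP1 ^ 2 = P1 ^ 2)
    (hQp : Qp.PosSemidef) (hQp2 : Qp ^ 2 = (2 : ℝ)⁻¹ • (absP1 + P1))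
    (hQm : Qm.PosSemidef) (hQm2 : Qm ^ 2 = (2 : ℝ)⁻¹ • (absP1 - P1))
    (a b : ℝ) (hab : a < b)
    (v g : ℝ → Fin d → ℝ)
    (hv : ContinuousOn v (Set.Icc a b))
    (hg : MemLp g 2 (volume.restrict (Set.Ioc a b)))
    (hvg : ∀ x ∈ Set.Icc a b, v x = v a + ∫ s in a..x, g s) :
    2 * ∫ x in a..b, (P1.mulVec (g x)) ⬝ᵥ (v x) =
      euclNorm (Qp.mulVec (v b) + Qm.mulVec (v a)) ^ 2 -
        euclNorm (Qp.mulVec (v a) + Qm.mulVec (v b)) ^ 2 :=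
  stmt_2_general P1 absP1 Qp Qm hP1symm habs2 hQp hQp2 hQm hQm2 a b hab v g hg hvg

end
end

section
/- Let H₀ ∈ ℝ^{d×d} be symmetric, positive semidefinite and invertible (hence positive definite), and let Q₁ ∈ ℝ^{d×d} be symmetric and invertible. Then sup_{t ∈ ℝ} ‖exp(i·t·Q₁·H₀)‖ < ∞, where exp denotes the matrix exponential of the complex matrix i·t·Q₁·H₀ and ‖·‖ is the spectral norm. -/
/-!
`H₀` has a symmetric square root `S`, invertible because `H₀` is, so `Q₁ H₀ = S⁻¹ (S Q₁ S) S` is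
similar to the symmetric matrix `S Q₁ S`. For Hermitian `M`, `exp (i t M)` is unitary and has
spectral norm at most `1`; conjugating by `S` costs at most the factor `‖S⁻¹‖ ‖S‖`, uniformly in `t`.
-/

open Matrix

noncomputable section

/-- The spectral (ℓ²-operator) norm of a square complex matrix. -/
def specNormC {d : ℕ} (A : Matrix (Fin d) (Fin d) ℂ) : ℝ :=
  ‖Matrix.toEuclideanCLM (𝕜 := ℂ) A‖

open scoped Matrix.Norms.L2Operator

lemma specNormC_eq_norm {d : ℕ} (A : Matrix (Fin d) (Fin d) ℂ) : specNormC A = ‖A‖ := rfl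

lemma CStarRing.norm_le_one_of_mem_unitary {E : Type*} [NormedRing E] [StarRing E] [CStarRing E]
    {u : E} (hu : u ∈ unitary E) : ‖u‖ ≤ 1 := by
  nontriviality E
  exact (CStarRing.norm_of_mem_unitary hu).le

namespace Matrix

variable {n : Type*}

lemma IsSymm.isHermitian_map_ofReal {M : Matrix n n ℝ} (h : M.IsSymm) :
    (M.map Complex.ofReal).IsHermitian :=
  (isHermitian_iff_isSymm.2 h).map _ fun _ ↦ by simp

variable [Fintype n] [DecidableEq n]

lemma PosSemidef.exists_isSymm_mul_self_eq {H : Matrix n n ℝ} (hH : H.PosSemidef) :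
    ∃ S : Matrix n n ℝ, S.IsSymm ∧ S * S = H := by
  open scoped MatrixOrder in
  exact ⟨CFC.sqrt H, isHermitian_iff_isSymm.1 (CFC.sqrt_nonneg H).posSemidef.isHermitian,
    CFC.sqrt_mul_sqrt_self H hH.nonneg⟩

lemma mul_mul_self_eq_conj {R : Matrix n n ℂ} (hR : IsUnit R) (B : Matrix n n ℂ) :
    B * (R * R) = R⁻¹ * (R * B * R) * R := by
  rw [mul_assoc R, nonsing_inv_mul_cancel_left _ _ ((isUnit_iff_isUnit_det R).1 hR), mul_assoc]

lemma IsHermitian.norm_exp_I_mul_smul_le_one {M : Matrix n n ℂ} (hM : M.IsHermitian) (t : ℝ) :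
    ‖NormedSpace.exp ((Complex.I * t) • M)‖ ≤ 1 := by
  rw [mul_smul]
  exact CStarRing.norm_le_one_of_mem_unitary (selfAdjoint.expUnitary
    ⟨(t : ℂ) • M, IsSelfAdjoint.smul (Complex.conj_ofReal t) hM.isSelfAdjoint⟩).prop

lemma IsHermitian.norm_exp_I_mul_smul_conj_le {M : Matrix n n ℂ} (hM : M.IsHermitian)
    {P : Matrix n n ℂ} (hP : IsUnit P) (t : ℝ) :
    ‖NormedSpace.exp ((Complex.I * t) • (P⁻¹ * M * P))‖ ≤ ‖P⁻¹‖ * ‖P‖ := by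
  rw [← smul_mul_assoc, ← mul_smul_comm, exp_conj' P _ hP]
  calc ‖P⁻¹ * NormedSpace.exp ((Complex.I * t) • M) * P‖
      ≤ ‖P⁻¹‖ * ‖NormedSpace.exp ((Complex.I * t) • M)‖ * ‖P‖ := norm_mul₃_le
    _ ≤ ‖P⁻¹‖ * 1 * ‖P‖ := by gcongr; exact hM.norm_exp_I_mul_smul_le_one t
    _ = ‖P⁻¹‖ * ‖P‖ := by rw [mul_one]

end Matrix

theorem stmt_4_general {d : ℕ} (H0 Q1 : Matrix (Fin d) (Fin d) ℝ)
    (hH0 : H0.PosSemidef) (hH0inv : IsUnit H0.det)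
    (hQ1 : Q1.IsSymm) :
    ∃ C : ℝ, ∀ t : ℝ,
      specNormC (NormedSpace.exp
        ((Complex.I * (t : ℂ)) • ((Q1.map Complex.ofReal) * (H0.map Complex.ofReal)))) ≤ C := by
  obtain ⟨S, hS, rfl⟩ := hH0.exists_isSymm_mul_self_eq
  set R := S.map Complex.ofReal
  have hR : IsUnit R := by
    rw [det_mul] at hH0inv
    have hSdet := (isUnit_of_mul_isUnit_left hH0inv).map Complex.ofRealHom
    rwa [RingHom.map_det, ← isUnit_iff_isUnit_det] at hSdet
  have hM : (R * Q1.map Complex.ofReal * R).IsHermitian := by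
    have hRQR := isHermitian_conjTranspose_mul_mul R hQ1.isHermitian_map_ofReal
    rwa [hS.isHermitian_map_ofReal.eq] at hRQR
  have hRR : (S * S).map Complex.ofReal = R * R := Matrix.map_mul (f := Complex.ofRealHom)
  refine ⟨‖R⁻¹‖ * ‖R‖, fun t ↦ ?_⟩
  rw [specNormC_eq_norm, hRR, mul_mul_self_eq_conj hR]
  exact hM.norm_exp_I_mul_smul_conj_le hR t

/-- **Proposition 4.1.** For `H₀` symmetric positive semidefinite and invertible
and `Q₁` symmetric invertible, `sup_{t ∈ ℝ} ‖exp(i t Q₁ H₀)‖ < ∞`. -/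
theorem stmt_4 {d : ℕ} (H0 Q1 : Matrix (Fin d) (Fin d) ℝ)
    (hH0 : H0.PosSemidef) (hH0inv : IsUnit H0.det)
    (hQ1 : Q1.IsSymm) (hQ1inv : IsUnit Q1.det) :
    ∃ C : ℝ, ∀ t : ℝ,
      specNormC (NormedSpace.exp
        ((Complex.I * (t : ℂ)) • ((Q1.map Complex.ofReal) * (H0.map Complex.ofReal)))) ≤ C :=
  stmt_4_general H0 Q1 hH0 hH0inv hQ1
end
end

section
/- Define f : ℝ → ℂ by f(t) := 1 + (e^{it} + e^{i√2·t})/2. Then: (1) f(t) ≠ 0 for every t ∈ ℝ; and (2) inf_{t ∈ ℝ} |f(t)| = 0, i.e. for every ε > 0 there exists t ∈ ℝ with |f(t)| < ε. -/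
/-!
Both exponentials lie on the unit circle and `-1` is an extreme point of the unit disc, so
`f t = 0` forces `e^{it} = e^{i√2 t} = -1`: then `t` and `√2 t` are both odd multiples of `π`,
contradicting the irrationality of `√2`. On the other hand `e^{it} = -1` at `t = (2k+1)π`, and
since `ℤ√2 + ℤ` is dense in `ℝ`, `k` can be chosen so that `√2 (2k+1)π` is arbitrarily close to
an odd multiple of `π`, which makes `f t = (1 + e^{i√2 t})/2` arbitrarily small.
-/

open Complex Real

theorem eq_and_eq_of_norm_eq_of_add_eq_two_smul {E : Type*} [NormedAddCommGroup E]
    [NormedSpace ℝ E] [StrictConvexSpace ℝ E] {x y z : E} (hx : ‖x‖ = ‖z‖) (hy : ‖y‖ = ‖z‖)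
    (h : x + y = (2 : ℝ) • z) : x = z ∧ y = z := by
  have hxy : x = y := eq_of_norm_eq_of_norm_add_eq (hx.trans hy.symm) <| by
    rw [h, norm_smul, hx, hy, Real.norm_two, two_mul]
  subst hxy
  have : (2 : ℝ) • x = (2 : ℝ) • z := by rw [two_smul, h]
  exact ⟨smul_right_injective E two_ne_zero this, smul_right_injective E two_ne_zero this⟩

theorem Complex.exp_I_mul_eq_neg_one_iff {t : ℝ} :
    exp (I * t) = -1 ↔ ∃ k : ℤ, t = (2 * k + 1) * π := by
  have hshift : exp (I * t) = -1 ↔ exp (I * t - π * I) = 1 := by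
    rw [exp_sub, exp_pi_mul_I, div_eq_one_iff_eq (by norm_num)]
  rw [hshift, exp_eq_one_iff]
  refine exists_congr fun k => ?_
  have hfactor : I * t - π * I - k * (2 * π * I) = I * ↑(t - (2 * k + 1) * π) := by
    push_cast; ring
  rw [← sub_eq_zero, hfactor, mul_eq_zero, or_iff_right I_ne_zero, ofReal_eq_zero, sub_eq_zero]

theorem Irrational.exp_I_mul_ne_neg_one_or {α : ℝ} (hα : Irrational α) (t : ℝ) :
    exp (I * t) ≠ -1 ∨ exp (I * (α * t)) ≠ -1 := by
  rw [or_iff_not_and_not, not_not, not_not]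
  rintro ⟨ht, hαt⟩
  obtain ⟨n, rfl⟩ := exp_I_mul_eq_neg_one_iff.1 ht
  obtain ⟨m, hm⟩ := exp_I_mul_eq_neg_one_iff.1 (by exact_mod_cast hαt)
  have hodd : (2 * n + 1 : ℤ) ≠ 0 := by omega
  refine (irrational_iff_ne_rational α).1 hα (2 * m + 1) (2 * n + 1) hodd ?_
  have : ((2 * n + 1 : ℤ) : ℝ) ≠ 0 := by exact_mod_cast hodd
  rw [eq_div_iff this]
  push_cast at this hm ⊢
  exact mul_right_cancel₀ pi_ne_zero (by linear_combination hm)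

theorem Irrational.one_add_midpoint_exp_ne_zero {α : ℝ} (hα : Irrational α) (t : ℝ) :
    1 + (exp (I * t) + exp (I * (α * t))) / 2 ≠ 0 := by
  intro h
  have hsum : exp (I * t) + exp (I * (α * t)) = (2 : ℝ) • (-1 : ℂ) := by
    rw [two_smul]; linear_combination 2 * h
  have hunit : ‖(-1 : ℂ)‖ = 1 := by simp
  obtain ⟨ht, hαt⟩ := eq_and_eq_of_norm_eq_of_add_eq_two_smul
    ((norm_exp_I_mul_ofReal t).trans hunit.symm)
    (by rw [← ofReal_mul, norm_exp_I_mul_ofReal, hunit]) hsum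
  exact (hα.exp_I_mul_ne_neg_one_or t).elim (· ht) (· hαt)

theorem Complex.norm_one_add_exp_I_mul_le (x : ℝ) (j : ℤ) :
    ‖1 + exp (I * x)‖ ≤ |x - (2 * j + 1) * π| := by
  have hsplit : exp (I * x) = -exp (I * ↑(x - (2 * j + 1) * π)) := by
    rw [← mul_neg_one, ← exp_I_mul_eq_neg_one_iff.2 ⟨j, rfl⟩, ← exp_add]
    congr 1; push_cast; ring
  rw [hsplit, show ∀ w : ℂ, 1 + -w = -(w - 1) from fun w => by ring, norm_neg,
    ← Real.norm_eq_abs]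
  exact norm_exp_I_mul_ofReal_sub_one_le

theorem Irrational.exists_abs_int_mul_add_int_sub_lt {α : ℝ} (hα : Irrational α) (c : ℝ)
    {δ : ℝ} (hδ : 0 < δ) : ∃ k m : ℤ, |k * α + m - c| < δ := by
  have hdense : Dense (AddSubgroup.closure {α, 1} : Set ℝ) :=
    dense_addSubgroupClosure_pair_iff.2 (by simpa using hα)
  obtain ⟨y, hyc, hy⟩ := Metric.dense_iff.1 hdense c δ hδ
  obtain ⟨k, m, rfl⟩ := AddSubgroup.mem_closure_pair.1 hy
  exact ⟨k, m, by simpa [Real.dist_eq] using hyc⟩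

theorem Irrational.exists_norm_one_add_midpoint_exp_lt {α : ℝ} (hα : Irrational α) {ε : ℝ}
    (hε : 0 < ε) : ∃ t : ℝ, ‖1 + (exp (I * t) + exp (I * (α * t))) / 2‖ < ε := by
  obtain ⟨k, m, hkm⟩ := hα.exists_abs_int_mul_add_int_sub_lt ((1 - α) / 2) (div_pos hε pi_pos)
  refine ⟨(2 * k + 1) * π, ?_⟩
  have hfirst : exp (I * ↑((2 * k + 1) * π)) = -1 := exp_I_mul_eq_neg_one_iff.2 ⟨k, rfl⟩
  have hdist : α * ((2 * k + 1) * π) - (2 * ↑(-m) + 1) * π =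
      2 * π * (k * α + m - (1 - α) / 2) := by
    push_cast; ring
  calc ‖1 + (exp (I * ↑((2 * k + 1) * π)) + exp (I * (α * ↑((2 * k + 1) * π)))) / 2‖
      = ‖1 + exp (I * ↑(α * ((2 * k + 1) * π)))‖ / 2 := by
        rw [hfirst, ofReal_mul α, show ∀ w : ℂ, 1 + (-1 + w) / 2 = (1 + w) / 2 from
          fun w => by ring, norm_div, Complex.norm_two]
    _ ≤ |α * ((2 * k + 1) * π) - (2 * ↑(-m) + 1) * π| / 2 := by
        gcongr; exact norm_one_add_exp_I_mul_le _ _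
    _ = π * |k * α + m - (1 - α) / 2| := by
        rw [hdist, abs_mul, abs_of_pos (by positivity)]; ring
    _ < π * (ε / π) := by gcongr
    _ = ε := by field_simp

/-- **Example 4.3.** For `f(t) = 1 + (e^{it} + e^{i√2 t})/2`:
(1) `f(t) ≠ 0` for all real `t`, and (2) `inf_{t ∈ ℝ} |f(t)| = 0`. -/
theorem stmt_5 :
    (∀ t : ℝ,
      (1 : ℂ) + (Complex.exp (Complex.I * t) + Complex.exp (Complex.I * (Real.sqrt 2 * t))) / 2
        ≠ 0) ∧
    (∀ ε : ℝ, 0 < ε → ∃ t : ℝ,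
      ‖(1 : ℂ) +
        (Complex.exp (Complex.I * t) + Complex.exp (Complex.I * (Real.sqrt 2 * t))) / 2‖ < ε) :=
  ⟨irrational_sqrt_two.one_add_midpoint_exp_ne_zero,
    fun _ hε => irrational_sqrt_two.exists_norm_one_add_midpoint_exp_lt hε⟩
end

section
/- Let a < b be reals and let M ∈ ℝ^{d×d}. Then for every y ∈ ℝ^d there exists a function v : [a,b] → ℝ^d belonging to H¹ such that Q₊v(b) + Q₋v(a) = y and Q₊v(a) + Q₋v(b) = M·y. In particular, the trace map v ↦ Q₊v(b) + Q₋v(a), restricted to H¹ functions satisfying the boundary condition Q₊v(a) + Q₋v(b) = M(Q₊v(b) + Q₋v(a)), is onto ℝ^d. -/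
open Matrix MeasureTheory

noncomputable section

/-! `Q₊` and `Q₋` are orthogonal (`Q₊Q₋ = Q₋Q₊ = 0`) and `Q₊² + Q₋² = |P₁|` is invertible. Writing
`y = |P₁|u` and `My = |P₁|w`, the boundary values `v(a) = Q₋u + Q₊w`, `v(b) = Q₊u + Q₋w` therefore
satisfy both conditions, and the affine interpolation between them is an `H¹` function. -/

namespace Matrix

variable {n 𝕜 : Type*} [Fintype n] [Field 𝕜] [PartialOrder 𝕜] [StarRing 𝕜]
  [StarOrderedRing 𝕜]

theorem mul_eq_zero_of_trace_sq_mul_sq {Qp Qm : Matrix n n 𝕜} (hp : Qp.IsHermitian)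
    (hm : Qm.IsHermitian) (h : (Qp * Qp * (Qm * Qm)).trace = 0) : Qp * Qm = 0 := by
  rw [← trace_conjTranspose_mul_self_eq_zero_iff, conjTranspose_mul, hp.eq, hm.eq, ← h,
    Matrix.mul_assoc, trace_mul_comm]
  simp only [Matrix.mul_assoc]

variable [DecidableEq n]

/-- `tr(Qp² Qm²) = tr((A + P)(A - P))/4 = tr(A² - P²)/4 = 0`. -/
theorem mul_eq_zero_of_sq_eq_half_add_of_sq_eq_half_sub {A P Qp Qm : Matrix n n 𝕜}
    (hA : A ^ 2 = P ^ 2) (hp : Qp.IsHermitian) (hm : Qm.IsHermitian)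
    (hQp : Qp ^ 2 = (2 : 𝕜)⁻¹ • (A + P)) (hQm : Qm ^ 2 = (2 : 𝕜)⁻¹ • (A - P)) :
    Qp * Qm = 0 := by
  refine mul_eq_zero_of_trace_sq_mul_sq hp hm ?_
  have hAP : (A + P) * (A - P) = A ^ 2 - P ^ 2 + (P * A - A * P) := by noncomm_ring
  rw [← sq, ← sq, hQp, hQm, smul_mul_smul_comm, trace_smul, hAP, hA, sub_self, zero_add,
    trace_sub, trace_mul_comm P A, sub_self, smul_zero]

variable {R : Type*} [CommRing R]

theorem exists_mulVec_add_mulVec_eq {Qp Qm : Matrix n n R} (hpm : Qp * Qm = 0)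
    (hmp : Qm * Qp = 0) (hA : IsUnit (Qp * Qp + Qm * Qm)) (y z : n → R) :
    ∃ va vb, Qp *ᵥ vb + Qm *ᵥ va = y ∧ Qp *ᵥ va + Qm *ᵥ vb = z := by
  obtain ⟨u, rfl⟩ := mulVec_surjective_iff_isUnit.mpr hA y
  obtain ⟨w, rfl⟩ := mulVec_surjective_iff_isUnit.mpr hA z
  refine ⟨Qm *ᵥ u + Qp *ᵥ w, Qp *ᵥ u + Qm *ᵥ w, ?_, ?_⟩ <;>
  · simp only [mulVec_add, mulVec_mulVec, add_mulVec, hpm, hmp, zero_mulVec]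
    abel

end Matrix

variable {E : Type*} [NormedAddCommGroup E] [NormedSpace ℝ E]

/-- `v` belongs to `H¹(a, b)` with weak derivative `g`. -/
def HasL2DerivOn (v g : ℝ → E) (a b : ℝ) : Prop :=
  ContinuousOn v (Set.Icc a b) ∧ MemLp g 2 (volume.restrict (Set.Ioc a b)) ∧
    ∀ x ∈ Set.Icc a b, v x = v a + ∫ s in a..x, g s

theorem exists_hasL2DerivOn_endpoints [CompleteSpace E] {a b : ℝ} (hab : a ≠ b) (va vb : E) :
    ∃ v g : ℝ → E, HasL2DerivOn v g a b ∧ v a = va ∧ v b = vb := by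
  set c := (b - a)⁻¹ • (vb - va)
  refine ⟨fun x ↦ va + (x - a) • c, fun _ ↦ c, ⟨by fun_prop, memLp_const c, ?_⟩, by simp, ?_⟩
  · intro x _
    simp [intervalIntegral.integral_const]
  · simp only [c, smul_smul, mul_inv_cancel₀ (sub_ne_zero.mpr hab.symm), one_smul]
    abel

theorem stmt_6_general {d : ℕ} (P1 absP1 Qp Qm : Matrix (Fin d) (Fin d) ℝ)
    (habs : absP1.PosDef) (habs2 : absP1 ^ 2 = P1 ^ 2)
    (hQp : Qp.PosSemidef) (hQp2 : Qp ^ 2 = (2 : ℝ)⁻¹ • (absP1 + P1))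
    (hQm : Qm.PosSemidef) (hQm2 : Qm ^ 2 = (2 : ℝ)⁻¹ • (absP1 - P1))
    (a b : ℝ) (hab : a < b)
    (M : Matrix (Fin d) (Fin d) ℝ) (y : Fin d → ℝ) :
    ∃ v g : ℝ → Fin d → ℝ,
      ContinuousOn v (Set.Icc a b) ∧
      MemLp g 2 (volume.restrict (Set.Ioc a b)) ∧
      (∀ x ∈ Set.Icc a b, v x = v a + ∫ s in a..x, g s) ∧
      Qp.mulVec (v b) + Qm.mulVec (v a) = y ∧
      Qp.mulVec (v a) + Qm.mulVec (v b) = M.mulVec y := by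
  have hpm : Qp * Qm = 0 :=
    mul_eq_zero_of_sq_eq_half_add_of_sq_eq_half_sub habs2 hQp.1 hQm.1 hQp2 hQm2
  have hmp : Qm * Qp = 0 :=
    mul_eq_zero_of_sq_eq_half_add_of_sq_eq_half_sub (A := absP1) (P := -P1) (by rw [neg_sq, habs2]) hQm.1 hQp.1 (by rw [hQm2, sub_eq_add_neg]) (by rw [hQp2, sub_neg_eq_add])
  have hsum : Qp * Qp + Qm * Qm = absP1 := by
    rw [← sq, ← sq, hQp2, hQm2]
    module
  obtain ⟨va, vb, hy, hMy⟩ :=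
    exists_mulVec_add_mulVec_eq hpm hmp (hsum ▸ habs.isUnit) y (M *ᵥ y)
  obtain ⟨v, g, ⟨hv, hg, hvg⟩, rfl, rfl⟩ := exists_hasL2DerivOn_endpoints hab.ne va vb
  exact ⟨v, g, hv, hg, hvg, hy, hMy⟩

/-- **Lemma 5.3.** For every `y ∈ ℝ^d` there is an `H¹` function
`v : [a,b] → ℝ^d` with `Q₊v(b) + Q₋v(a) = y` and `Q₊v(a) + Q₋v(b) = My`;
in particular the trace map `v ↦ Q₊v(b) + Q₋v(a)`, restricted to `H¹` functions
satisfying the boundary condition `Q₊v(a) + Q₋v(b) = M(Q₊v(b) + Q₋v(a))`,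
is onto `ℝ^d`. -/
theorem stmt_6 {d : ℕ} (P1 absP1 Qp Qm : Matrix (Fin d) (Fin d) ℝ)
    (hP1symm : P1.IsSymm) (hP1inv : IsUnit P1.det)
    (habs : absP1.PosDef) (habs2 : absP1 ^ 2 = P1 ^ 2)
    (hQp : Qp.PosSemidef) (hQp2 : Qp ^ 2 = (2 : ℝ)⁻¹ • (absP1 + P1))
    (hQm : Qm.PosSemidef) (hQm2 : Qm ^ 2 = (2 : ℝ)⁻¹ • (absP1 - P1))
    (a b : ℝ) (hab : a < b)
    (M : Matrix (Fin d) (Fin d) ℝ) (y : Fin d → ℝ) :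
    ∃ v g : ℝ → Fin d → ℝ,
      ContinuousOn v (Set.Icc a b) ∧
      MemLp g 2 (volume.restrict (Set.Ioc a b)) ∧
      (∀ x ∈ Set.Icc a b, v x = v a + ∫ s in a..x, g s) ∧
      Qp.mulVec (v b) + Qm.mulVec (v a) = y ∧
      Qp.mulVec (v a) + Qm.mulVec (v b) = M.mulVec y :=
  stmt_6_general P1 absP1 Qp Qm habs habs2 hQp hQp2 hQm hQm2 a b hab M y

end
end

section
/- Let a < b, let c > 0, and let M ∈ ℝ^{d×d} with spectral norm ‖M‖ ≤ 1. Then: (I) the inequality ∫_a^b ⟨P₁·v'(x), v(x)⟩ dx ≥ c·‖v(a)‖² holds for every v ∈ H¹ with Q₊v(a) + Q₋v(b) = M(Q₊v(b) + Q₋v(a)) if and only if ‖y‖² − ‖My‖² ≥ 2c·(n₊(My)² + n₋(y)²) for all y ∈ ℝ^d; (II) the inequality ∫_a^b ⟨P₁·v'(x), v(x)⟩ dx ≥ c·‖v(b)‖² holds for every such v if and only if ‖y‖² − ‖My‖² ≥ 2c·(n₊(y)² + n₋(My)²) for all y ∈ ℝ^d. -/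
/-!
The energy identity `∫ₐᵇ ⟨P v', v⟩ = (⟨P v(b), v(b)⟩ - ⟨P v(a), v(a)⟩) / 2`, the product rule for
absolutely continuous functions, reduces the integral inequality to one between boundary values.
The matrices `|P|`, `P`, `Q₊`, `Q₋` commute (a positive semidefinite square root commutes with
everything that commutes with its square), so `Q₊²Q₋² = (|P|² - P²) / 4 = 0` forces `Q₊Q₋ = 0`.
Together with `Q₊² - Q₋² = P` this makes the boundary energy `‖y‖² - ‖My‖²` in the variables
`y = Q₊v(b) + Q₋v(a)`, `My = Q₊v(a) + Q₋v(b)` of the boundary condition, while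
`‖v(a)‖² = n₊(My)² + n₋(y)²` and `‖v(b)‖² = n₊(y)² + n₋(My)²`. Conversely every `y` comes from
the boundary values of an affine `v`, since `Q₊² + Q₋² = |P|` is invertible.
-/

open Matrix MeasureTheory

noncomputable section

open Set

namespace Matrix

variable {ι : Type*} [Fintype ι]

open scoped ComplexOrder in
theorem PosSemidef.commute_of_commute_sq_s7 [DecidableEq ι] {𝕜 : Type*} [RCLike 𝕜]
    {Q B : Matrix ι ι 𝕜} (hQ : Q.PosSemidef) (h : Commute (Q ^ 2) B) : Commute Q B := by
  open scoped MatrixOrder in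
  rw [← CFC.sqrt_sq Q hQ.nonneg, CFC.sqrt_eq_cfc]
  exact h.cfc_nnreal _

theorem commute_nonsing_inv_left [DecidableEq ι] {α : Type*} [CommRing α] {A B : Matrix ι ι α}
    (h : Commute A B) : Commute A⁻¹ B := by
  by_cases hA : IsUnit A.det
  · calc A⁻¹ * B = A⁻¹ * (B * A) * A⁻¹ := by
          rw [mul_assoc, mul_assoc, mul_nonsing_inv _ hA, mul_one]
      _ = B * A⁻¹ := by rw [← h.eq, ← mul_assoc, nonsing_inv_mul _ hA, one_mul]
  · simp [nonsing_inv_apply_not_isUnit _ hA]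

theorem IsSymm.mulVec_dotProduct {α : Type*} [CommSemiring α] {Q : Matrix ι ι α} (hQ : Q.IsSymm)
    (x y : ι → α) : (Q *ᵥ x) ⬝ᵥ y = x ⬝ᵥ (Q *ᵥ y) := by
  rw [dotProduct_mulVec, ← vecMul_transpose, hQ.eq]

theorem mulVec_add_dotProduct_of_mul_eq_zero [DecidableEq ι] {α : Type*} [CommRing α]
    {X Q R : Matrix ι ι α} (hQ : Q.IsSymm) (hR : R.IsSymm) (hQR : Q * R = 0) (hRQ : R * Q = 0)
    (hXQ : Commute X Q) (hXR : Commute X R) (u w : ι → α) :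
    (X *ᵥ (Q *ᵥ u + R *ᵥ w)) ⬝ᵥ (Q *ᵥ u + R *ᵥ w) =
      ((X * Q ^ 2) *ᵥ u) ⬝ᵥ u + ((X * R ^ 2) *ᵥ w) ⬝ᵥ w := by
  have cross : ∀ {Q R : Matrix ι ι α}, R.IsSymm → Commute X R → R * Q = 0 →
      ∀ u w, (X *ᵥ Q *ᵥ u) ⬝ᵥ (R *ᵥ w) = 0 := by
    intro Q R hR hXR hRQ u w
    rw [← hR.mulVec_dotProduct, mulVec_mulVec, mulVec_mulVec, ← hXR.eq, mul_assoc, hRQ, mul_zero,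
      zero_mulVec, zero_dotProduct]
  have diag : ∀ {Q : Matrix ι ι α}, Q.IsSymm → Commute X Q →
      ∀ u, (X *ᵥ Q *ᵥ u) ⬝ᵥ (Q *ᵥ u) = ((X * Q ^ 2) *ᵥ u) ⬝ᵥ u := by
    intro Q hQ hXQ u
    rw [← hQ.mulVec_dotProduct, mulVec_mulVec, mulVec_mulVec, ← hXQ.eq, mul_assoc, sq]
  rw [mulVec_add, add_dotProduct, dotProduct_add, dotProduct_add, cross hR hXR hRQ,
    cross hQ hXQ hQR, diag hQ hXQ, diag hR hXR, add_zero, zero_add]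

end Matrix

section Primitive

variable {E F : Type*} [NormedAddCommGroup E] [NormedSpace ℝ E] [NormedAddCommGroup F]
  [NormedSpace ℝ F] {a b : ℝ}

theorem continuousOn_of_eq_add_integral {f f' : ℝ → E} (hab : a ≤ b)
    (hf' : IntervalIntegrable f' volume a b) (hf : ∀ x ∈ Icc a b, f x = f a + ∫ t in a..x, f' t) :
    ContinuousOn f (Icc a b) := by
  refine (continuousOn_const.add ?_).congr hf
  rw [← uIcc_of_le hab]
  exact intervalIntegral.continuousOn_primitive_interval
    (uIcc_of_le hab ▸ (intervalIntegrable_iff_integrableOn_Icc_of_le hab).mp hf')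

theorem ContinuousLinearMap.map_eq_add_integral [CompleteSpace E] [CompleteSpace F]
    (L : E →L[ℝ] F) {f f' : ℝ → E} (hab : a ≤ b) (hf' : IntervalIntegrable f' volume a b)
    (hf : ∀ x ∈ Icc a b, f x = f a + ∫ t in a..x, f' t) :
    ∀ x ∈ Icc a b, L (f x) = L (f a) + ∫ t in a..x, L (f' t) := by
  intro x hx
  rw [hf x hx, map_add, L.intervalIntegral_comp_comm]
  exact hf'.mono_set (by rw [uIcc_of_le hab, uIcc_of_le hx.1]; exact Icc_subset_Icc_right hx.2)

theorem exists_affine_eq_add_integral [CompleteSpace E] (hab : a < b) (va vb : E) :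
    ∃ v g : ℝ → E, v a = va ∧ v b = vb ∧ ContinuousOn v (Icc a b) ∧
      MemLp g 2 (volume.restrict (Ioc a b)) ∧ ∀ x ∈ Icc a b, v x = v a + ∫ s in a..x, g s := by
  set k := (b - a)⁻¹ • (vb - va)
  refine ⟨fun x => va + (x - a) • k, fun _ => k, by simp, ?_, by fun_prop, memLp_const k,
    fun x _ => by rw [intervalIntegral.integral_const]; simp⟩
  simp [k, smul_smul, mul_inv_cancel₀ (sub_ne_zero.mpr hab.ne')]

theorem integral_deriv_mul_add_mul_deriv_of_eq_add_integral {f f' h h' : ℝ → ℝ} (hab : a ≤ b)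
    (hf' : IntervalIntegrable f' volume a b) (hh' : IntervalIntegrable h' volume a b)
    (hf : ∀ x ∈ Icc a b, f x = f a + ∫ t in a..x, f' t)
    (hh : ∀ x ∈ Icc a b, h x = h a + ∫ t in a..x, h' t) :
    ∫ x in a..b, f' x * h x + f x * h' x = f b * h b - f a * h a := by
  have primitive : ∀ {f f' : ℝ → ℝ}, IntervalIntegrable f' volume a b →
      AbsolutelyContinuousOnInterval (fun x => f a + ∫ t in a..x, f' t) a b ∧
      ∀ᵐ x, x ∈ uIcc a b → deriv (fun x => f a + ∫ t in a..x, f' t) x = f' x := by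
    intro f f' hf'
    refine ⟨(LipschitzWith.const (f a)).lipschitzOnWith.absolutelyContinuousOnInterval.add
      (hf'.absolutelyContinuousOnInterval_intervalIntegral left_mem_uIcc), ?_⟩
    filter_upwards [hf'.ae_hasDerivAt_integral] with x hx hxab
    exact ((hx hxab a left_mem_uIcc).const_add (f a)).deriv
  obtain ⟨hFac, hFderiv⟩ := primitive (f := f) hf'
  obtain ⟨hHac, hHderiv⟩ := primitive (f := h) hh'
  have hparts := hFac.integral_deriv_mul_eq_sub hHac
  simp only [intervalIntegral.integral_same, add_zero, ← hf b ⟨hab, le_rfl⟩,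
    ← hh b ⟨hab, le_rfl⟩] at hparts
  rw [← hparts]
  refine intervalIntegral.integral_congr_ae ?_
  filter_upwards [hFderiv, hHderiv] with x hFx hHx hx
  have hx' : x ∈ uIcc a b := uIoc_subset_uIcc hx
  rw [hFx hx', hHx hx', ← hf x (uIcc_of_le hab ▸ hx'), ← hh x (uIcc_of_le hab ▸ hx')]

variable {ι : Type*} [Fintype ι]

theorem integral_dotProduct_deriv_add_of_eq_add_integral {u u' w w' : ℝ → ι → ℝ} (hab : a ≤ b)
    (hu' : IntervalIntegrable u' volume a b) (hw' : IntervalIntegrable w' volume a b)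
    (hu : ∀ x ∈ Icc a b, u x = u a + ∫ t in a..x, u' t)
    (hw : ∀ x ∈ Icc a b, w x = w a + ∫ t in a..x, w' t) :
    ∫ x in a..b, u' x ⬝ᵥ w x + u x ⬝ᵥ w' x = u b ⬝ᵥ w b - u a ⬝ᵥ w a := by
  have heval : ∀ {f : ℝ → ι → ℝ}, IntervalIntegrable f volume a b → ∀ i,
      IntervalIntegrable (fun x => f x i) volume a b := fun hf i =>
    ⟨hf.1.eval i, hf.2.eval i⟩
  have hrep : ∀ {f f' : ℝ → ι → ℝ}, IntervalIntegrable f' volume a b →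
      (∀ x ∈ Icc a b, f x = f a + ∫ t in a..x, f' t) →
      ∀ i, ∀ x ∈ Icc a b, f x i = f a i + ∫ t in a..x, f' t i := fun hf' hf i =>
    (ContinuousLinearMap.proj (R := ℝ) (φ := fun _ : ι => ℝ) i).map_eq_add_integral hab hf' hf
  have hcont : ∀ {f f' : ℝ → ι → ℝ}, IntervalIntegrable f' volume a b →
      (∀ x ∈ Icc a b, f x = f a + ∫ t in a..x, f' t) →
      ∀ i, ContinuousOn (fun x => f x i) (uIcc a b) := fun hf' hf i =>
    uIcc_of_le hab ▸ (continuous_apply i).comp_continuousOn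
      (continuousOn_of_eq_add_integral hab hf' hf)
  simp only [dotProduct, ← Finset.sum_add_distrib, ← Finset.sum_sub_distrib]
  rw [intervalIntegral.integral_finsetSum fun i _ =>
    ((heval hu' i).mul_continuousOn (hcont hw' hw i)).add
      ((heval hw' i).continuousOn_mul (hcont hu' hu i))]
  exact Finset.sum_congr rfl fun i _ => integral_deriv_mul_add_mul_deriv_of_eq_add_integral hab
    (heval hu' i) (heval hw' i) (hrep hu' hu i) (hrep hw' hw i)

theorem integral_mulVec_dotProduct_of_eq_add_integral {P : Matrix ι ι ℝ} (hP : P.IsSymm)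
    {v g : ℝ → ι → ℝ} (hab : a ≤ b) (hg : IntervalIntegrable g volume a b)
    (hv : ∀ x ∈ Icc a b, v x = v a + ∫ t in a..x, g t) :
    ∫ x in a..b, (P *ᵥ g x) ⬝ᵥ v x = ((P *ᵥ v b) ⬝ᵥ v b - (P *ᵥ v a) ⬝ᵥ v a) / 2 := by
  set L := (mulVecLin P).toContinuousLinearMap
  have hPg : IntervalIntegrable (fun x => P *ᵥ g x) volume a b :=
    ⟨L.integrable_comp hg.1, L.integrable_comp hg.2⟩
  have hPv : ∀ x ∈ Icc a b, P *ᵥ v x = P *ᵥ v a + ∫ t in a..x, P *ᵥ g t :=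
    L.map_eq_add_integral hab hg hv
  have hparts := integral_dotProduct_deriv_add_of_eq_add_integral hab hPg hg hPv hv
  have hsymm : ∀ x, (P *ᵥ v x) ⬝ᵥ g x = (P *ᵥ g x) ⬝ᵥ v x := fun x => by
    rw [hP.mulVec_dotProduct, dotProduct_comm]
  simp only [hsymm, ← two_mul, intervalIntegral.integral_const_mul] at hparts
  linarith

end Primitive

/-- `A` plays the role of `|P|`, and `Qp`, `Qm` of the square roots `Q₊`, `Q₋` of
`(|P| ± P) / 2`. -/
structure IsSignDecomposition {ι : Type*} [Fintype ι] [DecidableEq ι]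
    (P A Qp Qm : Matrix ι ι ℝ) : Prop where
  isUnit_det : IsUnit P.det
  posDef : A.PosDef
  sq_eq_sq : A ^ 2 = P ^ 2
  posSemidef_qp : Qp.PosSemidef
  sq_qp : Qp ^ 2 = (2 : ℝ)⁻¹ • (A + P)
  posSemidef_qm : Qm.PosSemidef
  sq_qm : Qm ^ 2 = (2 : ℝ)⁻¹ • (A - P)

namespace IsSignDecomposition

variable {ι : Type*} [Fintype ι] [DecidableEq ι] {P A Qp Qm : Matrix ι ι ℝ}

theorem commute (h : IsSignDecomposition P A Qp Qm) : Commute A P :=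
  h.posDef.posSemidef.commute_of_commute_sq_s7 (h.sq_eq_sq ▸ (Commute.refl P).pow_left 2)

theorem commute_qp_of_commute (h : IsSignDecomposition P A Qp Qm) {B : Matrix ι ι ℝ}
    (hA : Commute A B) (hP : Commute P B) : Commute Qp B :=
  h.posSemidef_qp.commute_of_commute_sq_s7 (h.sq_qp ▸ (hA.add_left hP).smul_left _)

theorem commute_qm_of_commute (h : IsSignDecomposition P A Qp Qm) {B : Matrix ι ι ℝ}
    (hA : Commute A B) (hP : Commute P B) : Commute Qm B :=
  h.posSemidef_qm.commute_of_commute_sq_s7 (h.sq_qm ▸ (hA.sub_left hP).smul_left _)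

theorem commute_qp_abs (h : IsSignDecomposition P A Qp Qm) : Commute Qp A :=
  h.commute_qp_of_commute (Commute.refl A) h.commute.symm

theorem commute_qp (h : IsSignDecomposition P A Qp Qm) : Commute Qp P :=
  h.commute_qp_of_commute h.commute (Commute.refl P)

theorem commute_qm_abs (h : IsSignDecomposition P A Qp Qm) : Commute Qm A :=
  h.commute_qm_of_commute (Commute.refl A) h.commute.symm

theorem commute_qm (h : IsSignDecomposition P A Qp Qm) : Commute Qm P :=
  h.commute_qm_of_commute h.commute (Commute.refl P)

theorem isSymm_qp (h : IsSignDecomposition P A Qp Qm) : Qp.IsSymm :=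
  isHermitian_iff_isSymm.mp h.posSemidef_qp.isHermitian

theorem isSymm_qm (h : IsSignDecomposition P A Qp Qm) : Qm.IsSymm :=
  isHermitian_iff_isSymm.mp h.posSemidef_qm.isHermitian

theorem isUnit_det_abs (h : IsSignDecomposition P A Qp Qm) : IsUnit A.det :=
  h.posDef.isUnit.map detMonoidHom

theorem qp_mul_qm (h : IsSignDecomposition P A Qp Qm) : Qp * Qm = 0 := by
  rw [← conjTranspose_mul_self_eq_zero, conjTranspose_mul, h.posSemidef_qp.isHermitian.eq,
    h.posSemidef_qm.isHermitian.eq]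
  calc Qm * Qp * (Qp * Qm) = Qm * Qp ^ 2 * Qm := by noncomm_ring
    _ = (2 : ℝ)⁻¹ • (A + P) * Qm ^ 2 := by
      rw [h.sq_qp, Matrix.mul_smul, Matrix.smul_mul, mul_add, h.commute_qm_abs.eq,
        h.commute_qm.eq]
      noncomm_ring
    _ = 0 := by
      rw [h.sq_qm, Matrix.mul_smul, Matrix.smul_mul, add_mul, mul_sub, mul_sub, ← sq, ← sq,
        h.sq_eq_sq, h.commute.eq]
      simp

theorem qm_mul_qp (h : IsSignDecomposition P A Qp Qm) : Qm * Qp = 0 := by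
  simpa [h.isSymm_qp.eq, h.isSymm_qm.eq] using congrArg transpose h.qp_mul_qm

/-- With `u = v b`, `w = v a` this is the boundary energy `⟨P v, v⟩|ₐᵇ = ‖y‖² - ‖My‖²`. -/
theorem dotProduct_sub_dotProduct (h : IsSignDecomposition P A Qp Qm) (u w : ι → ℝ) :
    (Qp *ᵥ u + Qm *ᵥ w) ⬝ᵥ (Qp *ᵥ u + Qm *ᵥ w) - (Qp *ᵥ w + Qm *ᵥ u) ⬝ᵥ (Qp *ᵥ w + Qm *ᵥ u) =
      (P *ᵥ u) ⬝ᵥ u - (P *ᵥ w) ⬝ᵥ w := by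
  have hsum := mulVec_add_dotProduct_of_mul_eq_zero h.isSymm_qp h.isSymm_qm h.qp_mul_qm
    h.qm_mul_qp (Commute.one_left Qp) (Commute.one_left Qm)
  simp only [one_mulVec, one_mul] at hsum
  have hP : Qp ^ 2 - Qm ^ 2 = P := by rw [h.sq_qp, h.sq_qm]; module
  rw [hsum, hsum, ← hP, sub_mulVec, sub_mulVec, sub_dotProduct, sub_dotProduct]
  ring

theorem inv_mul_proj_mul_sq (h : IsSignDecomposition P A Qp Qm) :
    P⁻¹ * ((2 : ℝ)⁻¹ • (1 + A⁻¹ * P)) * Qp ^ 2 = (2 : ℝ)⁻¹ • (1 + A⁻¹ * P) ∧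
    P⁻¹ * ((2 : ℝ)⁻¹ • (1 + A⁻¹ * P)) * Qm ^ 2 = 0 ∧
    P⁻¹ * ((2 : ℝ)⁻¹ • (1 - A⁻¹ * P)) * Qp ^ 2 = 0 ∧
    P⁻¹ * ((2 : ℝ)⁻¹ • (1 - A⁻¹ * P)) * Qm ^ 2 = -((2 : ℝ)⁻¹ • (1 - A⁻¹ * P)) := by
  have hP := nonsing_inv_mul _ h.isUnit_det
  have hPA : A⁻¹ * (P * A) = P := by
    rw [← h.commute.eq, ← mul_assoc, nonsing_inv_mul _ h.isUnit_det_abs, one_mul]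
  have hPP : A⁻¹ * (P * P) = A := by
    rw [← sq, ← h.sq_eq_sq, sq, ← mul_assoc, nonsing_inv_mul _ h.isUnit_det_abs, one_mul]
  have hAP : P⁻¹ * A = A⁻¹ * P :=
    calc P⁻¹ * A = P⁻¹ * (P * A⁻¹ * P) := by
          rw [← (commute_nonsing_inv_left h.commute).eq, mul_assoc A⁻¹, hPP]
      _ = P⁻¹ * P * (A⁻¹ * P) := by simp only [mul_assoc]
      _ = A⁻¹ * P := by rw [hP, one_mul]
  rw [h.sq_qp, h.sq_qm]
  refine ⟨?_, ?_, ?_, ?_⟩ <;>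
  · simp only [Matrix.mul_smul, Matrix.smul_mul, mul_add, add_mul, mul_sub, sub_mul, mul_one,
      mul_assoc, hP, hPA, hPP, hAP]
    module

/-- With `(u, w) = (v a, v b)` or `(v b, v a)` this is `‖v a‖² = n₊(My)² + n₋(y)²`, resp.
`‖v b‖² = n₊(y)² + n₋(My)²`. -/
theorem proj_mulVec_dotProduct_sub_eq_dotProduct_self (h : IsSignDecomposition P A Qp Qm)
    (u w : ι → ℝ) :
    ((P⁻¹ * ((2 : ℝ)⁻¹ • (1 + A⁻¹ * P))) *ᵥ (Qp *ᵥ u + Qm *ᵥ w)) ⬝ᵥ (Qp *ᵥ u + Qm *ᵥ w) -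
      ((P⁻¹ * ((2 : ℝ)⁻¹ • (1 - A⁻¹ * P))) *ᵥ (Qp *ᵥ w + Qm *ᵥ u)) ⬝ᵥ (Qp *ᵥ w + Qm *ᵥ u) =
      u ⬝ᵥ u := by
  have hcomm : ∀ {B}, Commute A B → Commute P B →
      Commute (P⁻¹ * ((2 : ℝ)⁻¹ • (1 + A⁻¹ * P))) B ∧
        Commute (P⁻¹ * ((2 : ℝ)⁻¹ • (1 - A⁻¹ * P))) B := fun hA hP =>
    ⟨(commute_nonsing_inv_left hP).mul_left
      (((Commute.one_left _).add_left ((commute_nonsing_inv_left hA).mul_left hP)).smul_left _),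
     (commute_nonsing_inv_left hP).mul_left
      (((Commute.one_left _).sub_left ((commute_nonsing_inv_left hA).mul_left hP)).smul_left _)⟩
  have hQp := hcomm h.commute_qp_abs.symm h.commute_qp.symm
  have hQm := hcomm h.commute_qm_abs.symm h.commute_qm.symm
  obtain ⟨h₁, h₂, h₃, h₄⟩ := h.inv_mul_proj_mul_sq
  rw [mulVec_add_dotProduct_of_mul_eq_zero h.isSymm_qp h.isSymm_qm h.qp_mul_qm h.qm_mul_qp
      hQp.1 hQm.1,
    mulVec_add_dotProduct_of_mul_eq_zero h.isSymm_qp h.isSymm_qm h.qp_mul_qm h.qm_mul_qp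
      hQp.2 hQm.2, h₁, h₂, h₃, h₄, zero_mulVec, zero_dotProduct, add_zero, zero_add,
    neg_mulVec, neg_dotProduct, sub_neg_eq_add, ← add_dotProduct, ← add_mulVec]
  rw [show (2 : ℝ)⁻¹ • (1 + A⁻¹ * P) + (2 : ℝ)⁻¹ • (1 - A⁻¹ * P) = 1 by module, one_mulVec]

theorem exists_mulVec_add_eq (h : IsSignDecomposition P A Qp Qm) (y z : ι → ℝ) :
    ∃ u w, Qp *ᵥ u + Qm *ᵥ w = y ∧ Qp *ᵥ w + Qm *ᵥ u = z := by
  have hp : Qp * A⁻¹ = A⁻¹ * Qp := (commute_nonsing_inv_left h.commute_qp_abs.symm).eq.symm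
  have hm : Qm * A⁻¹ = A⁻¹ * Qm := (commute_nonsing_inv_left h.commute_qm_abs.symm).eq.symm
  have hdiag : Qp * A⁻¹ * Qp + Qm * A⁻¹ * Qm = 1 := by
    have hA : Qp ^ 2 + Qm ^ 2 = A := by rw [h.sq_qp, h.sq_qm]; module
    rw [hp, hm, mul_assoc, mul_assoc, ← mul_add, ← sq, ← sq, hA,
      nonsing_inv_mul _ h.isUnit_det_abs]
  have hpm : Qp * A⁻¹ * Qm = 0 := by rw [hp, mul_assoc, h.qp_mul_qm, mul_zero]
  have hmp : Qm * A⁻¹ * Qp = 0 := by rw [hm, mul_assoc, h.qm_mul_qp, mul_zero]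
  refine ⟨A⁻¹ *ᵥ (Qp *ᵥ y + Qm *ᵥ z), A⁻¹ *ᵥ (Qm *ᵥ y + Qp *ᵥ z), ?_, ?_⟩ <;>
  · simp only [mulVec_add, mulVec_mulVec, ← mul_assoc, hpm, hmp, zero_mulVec, add_zero, zero_add]
    rw [← add_mulVec, hdiag, one_mulVec]

theorem forall_integral_ge_iff (h : IsSignDecomposition P A Qp Qm) (hP : P.IsSymm) {a b : ℝ}
    (hab : a < b) (M : Matrix ι ι ℝ) (c : ℝ) (Φ Ψ : (ι → ℝ) → (ι → ℝ) → ℝ)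
    (hΦΨ : ∀ u w, Φ u w = Ψ (Qp *ᵥ w + Qm *ᵥ u) (Qp *ᵥ u + Qm *ᵥ w)) :
    (∀ v g : ℝ → ι → ℝ, ContinuousOn v (Icc a b) → MemLp g 2 (volume.restrict (Ioc a b)) →
        (∀ x ∈ Icc a b, v x = v a + ∫ s in a..x, g s) →
        Qp *ᵥ v a + Qm *ᵥ v b = M *ᵥ (Qp *ᵥ v b + Qm *ᵥ v a) →
        ∫ x in a..b, (P *ᵥ g x) ⬝ᵥ v x ≥ c * Φ (v a) (v b)) ↔
      ∀ y, y ⬝ᵥ y - (M *ᵥ y) ⬝ᵥ (M *ᵥ y) ≥ 2 * c * Ψ y (M *ᵥ y) := by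
  have energy : ∀ v g : ℝ → ι → ℝ, MemLp g 2 (volume.restrict (Ioc a b)) →
      (∀ x ∈ Icc a b, v x = v a + ∫ s in a..x, g s) →
      ∫ x in a..b, (P *ᵥ g x) ⬝ᵥ v x = ((Qp *ᵥ v b + Qm *ᵥ v a) ⬝ᵥ (Qp *ᵥ v b + Qm *ᵥ v a) -
        (Qp *ᵥ v a + Qm *ᵥ v b) ⬝ᵥ (Qp *ᵥ v a + Qm *ᵥ v b)) / 2 := fun v g hg hv => by
    rw [integral_mulVec_dotProduct_of_eq_add_integral hP hab.le
      ((intervalIntegrable_iff_integrableOn_Ioc_of_le hab.le).mpr (hg.integrable one_le_two)) hv,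
      h.dotProduct_sub_dotProduct]
  constructor
  · intro H y
    obtain ⟨vb, va, hy, hMy⟩ := h.exists_mulVec_add_eq y (M *ᵥ y)
    obtain ⟨v, g, rfl, rfl, hcont, hg, hv⟩ := exists_affine_eq_add_integral hab va vb
    have hv_ge := H v g hcont hg hv (by rw [hy, hMy])
    rw [energy v g hg hv, hΦΨ, hy, hMy] at hv_ge
    linarith
  · intro H v g _ hg hv hbc
    have hy := H (Qp *ᵥ v b + Qm *ᵥ v a)
    rw [← hbc] at hy
    rw [energy v g hg hv, hΦΨ]
    linarith

end IsSignDecomposition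

theorem stmt_7_general {d : ℕ} (P1 absP1 Qp Qm Pp Pm : Matrix (Fin d) (Fin d) ℝ)
    (hP1symm : P1.IsSymm) (hP1inv : IsUnit P1.det)
    (habs : absP1.PosDef) (habs2 : absP1 ^ 2 = P1 ^ 2)
    (hQp : Qp.PosSemidef) (hQp2 : Qp ^ 2 = (2 : ℝ)⁻¹ • (absP1 + P1))
    (hQm : Qm.PosSemidef) (hQm2 : Qm ^ 2 = (2 : ℝ)⁻¹ • (absP1 - P1))
    (hPp : Pp = (2 : ℝ)⁻¹ • ((1 : Matrix (Fin d) (Fin d) ℝ) + absP1⁻¹ * P1))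
    (hPm : Pm = (2 : ℝ)⁻¹ • ((1 : Matrix (Fin d) (Fin d) ℝ) - absP1⁻¹ * P1))
    (a b : ℝ) (hab : a < b) (c : ℝ)
    (M : Matrix (Fin d) (Fin d) ℝ)
    -- squared `E₊`- and `E₋`-norms
    (np2 nm2 : (Fin d → ℝ) → ℝ)
    (hnp2 : ∀ z, np2 z = (P1⁻¹ * Pp).mulVec z ⬝ᵥ z)
    (hnm2 : ∀ z, nm2 z = -((P1⁻¹ * Pm).mulVec z ⬝ᵥ z)) :
    -- (I)
    ((∀ v g : ℝ → Fin d → ℝ,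
        ContinuousOn v (Set.Icc a b) →
        MemLp g 2 (volume.restrict (Set.Ioc a b)) →
        (∀ x ∈ Set.Icc a b, v x = v a + ∫ s in a..x, g s) →
        Qp.mulVec (v a) + Qm.mulVec (v b) =
          M.mulVec (Qp.mulVec (v b) + Qm.mulVec (v a)) →
        (∫ x in a..b, (P1.mulVec (g x)) ⬝ᵥ (v x)) ≥ c * euclNorm (v a) ^ 2) ↔
      (∀ y : Fin d → ℝ,
        euclNorm y ^ 2 - euclNorm (M.mulVec y) ^ 2 ≥
          2 * c * (np2 (M.mulVec y) + nm2 y))) ∧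
    -- (II)
    ((∀ v g : ℝ → Fin d → ℝ,
        ContinuousOn v (Set.Icc a b) →
        MemLp g 2 (volume.restrict (Set.Ioc a b)) →
        (∀ x ∈ Set.Icc a b, v x = v a + ∫ s in a..x, g s) →
        Qp.mulVec (v a) + Qm.mulVec (v b) =
          M.mulVec (Qp.mulVec (v b) + Qm.mulVec (v a)) →
        (∫ x in a..b, (P1.mulVec (g x)) ⬝ᵥ (v x)) ≥ c * euclNorm (v b) ^ 2) ↔
      (∀ y : Fin d → ℝ,
        euclNorm y ^ 2 - euclNorm (M.mulVec y) ^ 2 ≥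
          2 * c * (np2 y + nm2 (M.mulVec y)))) := by
  have h : IsSignDecomposition P1 absP1 Qp Qm := ⟨hP1inv, habs, habs2, hQp, hQp2, hQm, hQm2⟩
  subst hPp hPm
  simp only [euclNorm_sq]
  refine ⟨h.forall_integral_ge_iff hP1symm hab M c (fun u _ => u ⬝ᵥ u) (fun y z => np2 z + nm2 y)
      fun u w => ?_,
    h.forall_integral_ge_iff hP1symm hab M c (fun _ w => w ⬝ᵥ w) (fun y z => np2 y + nm2 z)
      fun u w => ?_⟩
  · rw [hnp2, hnm2, ← h.proj_mulVec_dotProduct_sub_eq_dotProduct_self u w]; ring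
  · rw [hnp2, hnm2, ← h.proj_mulVec_dotProduct_sub_eq_dotProduct_self w u]; ring

/-- **Lemma 5.4.** Equivalence of the real-part boundary inequality
`∫_a^b ⟨P₁ v', v⟩ ≥ c ‖v(η)‖²` (for all `H¹` functions `v` satisfying the
boundary condition given by `M`) with a finite-dimensional inequality,
for `η = a` (part I) and `η = b` (part II). Here `n₊(z)² = ⟨P₁⁻¹P₊z, z⟩`
and `n₋(z)² = −⟨P₁⁻¹P₋z, z⟩`. -/
theorem stmt_7 {d : ℕ} (P1 absP1 Qp Qm Pp Pm : Matrix (Fin d) (Fin d) ℝ)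
    (hP1symm : P1.IsSymm) (hP1inv : IsUnit P1.det)
    (habs : absP1.PosDef) (habs2 : absP1 ^ 2 = P1 ^ 2)
    (hQp : Qp.PosSemidef) (hQp2 : Qp ^ 2 = (2 : ℝ)⁻¹ • (absP1 + P1))
    (hQm : Qm.PosSemidef) (hQm2 : Qm ^ 2 = (2 : ℝ)⁻¹ • (absP1 - P1))
    (hPp : Pp = (2 : ℝ)⁻¹ • ((1 : Matrix (Fin d) (Fin d) ℝ) + absP1⁻¹ * P1))
    (hPm : Pm = (2 : ℝ)⁻¹ • ((1 : Matrix (Fin d) (Fin d) ℝ) - absP1⁻¹ * P1))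
    (a b : ℝ) (hab : a < b) (c : ℝ) (hc : 0 < c)
    (M : Matrix (Fin d) (Fin d) ℝ) (hM : specNorm M ≤ 1)
    -- squared `E₊`- and `E₋`-norms
    (np2 nm2 : (Fin d → ℝ) → ℝ)
    (hnp2 : ∀ z, np2 z = (P1⁻¹ * Pp).mulVec z ⬝ᵥ z)
    (hnm2 : ∀ z, nm2 z = -((P1⁻¹ * Pm).mulVec z ⬝ᵥ z)) :
    -- (I)
    ((∀ v g : ℝ → Fin d → ℝ,
        ContinuousOn v (Set.Icc a b) →
        MemLp g 2 (volume.restrict (Set.Ioc a b)) →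
        (∀ x ∈ Set.Icc a b, v x = v a + ∫ s in a..x, g s) →
        Qp.mulVec (v a) + Qm.mulVec (v b) =
          M.mulVec (Qp.mulVec (v b) + Qm.mulVec (v a)) →
        (∫ x in a..b, (P1.mulVec (g x)) ⬝ᵥ (v x)) ≥ c * euclNorm (v a) ^ 2) ↔
      (∀ y : Fin d → ℝ,
        euclNorm y ^ 2 - euclNorm (M.mulVec y) ^ 2 ≥
          2 * c * (np2 (M.mulVec y) + nm2 y))) ∧
    -- (II)
    ((∀ v g : ℝ → Fin d → ℝ,
        ContinuousOn v (Set.Icc a b) →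
        MemLp g 2 (volume.restrict (Set.Ioc a b)) →
        (∀ x ∈ Set.Icc a b, v x = v a + ∫ s in a..x, g s) →
        Qp.mulVec (v a) + Qm.mulVec (v b) =
          M.mulVec (Qp.mulVec (v b) + Qm.mulVec (v a)) →
        (∫ x in a..b, (P1.mulVec (g x)) ⬝ᵥ (v x)) ≥ c * euclNorm (v b) ^ 2) ↔
      (∀ y : Fin d → ℝ,
        euclNorm y ^ 2 - euclNorm (M.mulVec y) ^ 2 ≥
          2 * c * (np2 y + nm2 (M.mulVec y)))) :=
  stmt_7_general P1 absP1 Qp Qm Pp Pm hP1symm hP1inv habs habs2 hQp hQp2 hQm hQm2 hPp hPm a b hab c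
    M np2 nm2 hnp2 hnm2

end
end
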